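/- arXiv:1412.7018 — 9 statements merged into one kernel-verified Lean document; each statement's English description precedes it below -/
import Mathlib

section
/- Deviation identity between a linear continuous first-order diffusion process and any discrete (rounded) version of it (Lemma 3). Let n ≥ 1 and let C : (Fin n → ℝ) →ₗ[ℝ] Matrix (Fin n) (Fin n) ℝ be a linear map assigning to each load vector a flow matrix, with antisymmetric values: (C x) i j = −(C x) j i for all x, i, j. Define the continuous one-round update F : (Fin n → ℝ) → (Fin n → ℝ) by (F x) i = x i − Σ_j (C x) i j. Let x₀ be any load vector and let e : ℕ → Matrix (Fin n) (Fin n) ℝ be any family of rounding-error matrices with (e s) i j = −(e s) j i for all s, i, j. Define trajectories xC(0) = xD(0) = x₀, xC(t+1) = F(xC(t)), and xD(t+1) i = (F (xD t)) i + Σ_j (e t) i j. Then for every node k and every round t: xD(t) k − xC(t) k = Σ_{s=0}^{t−1} Σ_{i<j} (e s) i j · ((F^[t−1−s] (δᵢ − δⱼ)) k), where δᵢ is the standard basis vector with 1 in coordinate i and F^[r] is the r-fold iterate of F. -/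
/-!
Since `F` is linear, the deviation `d t = xD t - xC t` obeys `d (t + 1) = F (d t) + E t`, where
`E t` is the vector of row sums of the error matrix `e t`; unrolling this recursion gives
`d t = ∑ s < t, F^[t - 1 - s] (E s)`. Antisymmetry of `e s` then splits each row-sum vector into
edge contributions `E s = ∑ i < j, (e s i j) • (δᵢ - δⱼ)`, and linearity of `F^[r]` finishes.
-/

open Finset

variable {ι R : Type*} [Fintype ι] [Ring R]

def firstOrderDiffusion (C : (ι → R) →ₗ[R] Matrix ι ι R) : (ι → R) →ₗ[R] ι → R where
  toFun x i := x i - ∑ j, C x i j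
  map_add' x y := by
    ext i
    simp only [map_add, Pi.add_apply, Matrix.add_apply, sum_add_distrib]
    abel
  map_smul' c x := by
    ext i
    simp [mul_sub, mul_sum]

theorem sum_lt_smul_sub_single_eq_rowSum [LinearOrder ι] [NoZeroDivisors R] [CharZero R]
    (A : Matrix ι ι R) (hA : ∀ i j, A i j = -A j i) :
    ∑ i, ∑ j, (if i < j then A i j • (Pi.single i 1 - Pi.single j 1 : ι → R) else 0) =
      fun i => ∑ j, A i j := by
  ext m
  have hsplit (i j : ι) :
      (if i < j then (if m = i then A i j else 0) - (if m = j then A i j else 0) else 0) =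
        (if m = i then (if m < j then A m j else 0) else 0) -
          (if m = j then (if i < m then A i m else 0) else 0) := by
    clear hA
    split_ifs <;> subst_vars <;> simp_all
  have hdiag : A m m = 0 := CharZero.eq_neg_self_iff.mp (hA m m)
  have hrow (j : ι) :
      A m j = (if m < j then A m j else 0) - (if j < m then A j m else 0) := by
    rcases lt_trichotomy m j with h | rfl | h
    · simp [h, h.not_gt]
    · simp [hdiag]
    · simp [h, h.not_gt, hA m j]
  simp only [Finset.sum_apply, apply_ite (fun v : ι → R => v m), Pi.smul_apply, Pi.sub_apply,
    Pi.single_apply, smul_eq_mul, mul_sub, mul_ite, mul_one, mul_zero, Pi.zero_apply]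
  simp only [hsplit, sum_sub_distrib, sum_ite_eq, mem_univ, if_true]
  rw [sum_comm]
  simp only [sum_ite_eq, mem_univ, if_true]
  rw [← sum_sub_distrib]
  exact (sum_congr rfl fun j _ => hrow j).symm

theorem sub_eq_sum_iterate_of_perturbed {M : Type*} [AddCommGroup M] (f : M →+ M)
    {u v b : ℕ → M} (h0 : u 0 = v 0) (hu : ∀ t, u (t + 1) = f (u t) + b t)
    (hv : ∀ t, v (t + 1) = f (v t)) (t : ℕ) :
    u t - v t = ∑ s ∈ range t, f^[t - 1 - s] (b s) := by
  induction t with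
  | zero => simp [h0]
  | succ t ih =>
    have hstep : u (t + 1) - v (t + 1) = f (u t - v t) + b t := by
      rw [hu, hv, map_sub]
      abel
    rw [hstep, ih, map_sum, sum_range_succ, Nat.add_sub_cancel, Nat.sub_self,
      Function.iterate_zero_apply]
    congr 1
    refine sum_congr rfl fun s hs => ?_
    rw [← Function.iterate_succ_apply' f]
    have := mem_range.mp hs
    congr 2
    omega

theorem deviation_identity_linear_FOS_general
    (n : ℕ)
    (C : (Fin n → ℝ) →ₗ[ℝ] Matrix (Fin n) (Fin n) ℝ)
    (F : (Fin n → ℝ) → (Fin n → ℝ))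
    (hF : ∀ (x : Fin n → ℝ) (i : Fin n), F x i = x i - ∑ j, C x i j)
    (x₀ : Fin n → ℝ)
    (e : ℕ → Matrix (Fin n) (Fin n) ℝ)
    (he : ∀ (s : ℕ) (i j : Fin n), e s i j = -(e s j i))
    (xC xD : ℕ → Fin n → ℝ)
    (hxC0 : xC 0 = x₀) (hxD0 : xD 0 = x₀)
    (hxC : ∀ t, xC (t + 1) = F (xC t))
    (hxD : ∀ t i, xD (t + 1) i = F (xD t) i + ∑ j, e t i j)
    (k : Fin n) (t : ℕ) :
    xD t k - xC t k =
      ∑ s ∈ Finset.range t, ∑ i : Fin n, ∑ j : Fin n,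
        if i < j then
          e s i j * (F^[t - 1 - s] (Pi.single i 1 - Pi.single j 1)) k
        else 0 := by
  have hFG : F = firstOrderDiffusion C := funext fun x => funext (hF x)
  have hiter (r : ℕ) : F^[r] = ⇑(firstOrderDiffusion C ^ r) := by
    rw [hFG, Module.End.coe_pow]
  have hdev := sub_eq_sum_iterate_of_perturbed (firstOrderDiffusion C).toAddMonoidHom
    (b := fun s i => ∑ j, e s i j) (hxD0.trans hxC0.symm)
    (fun t => funext fun i => by rw [hxD, hFG]; rfl) (fun t => by rw [hxC, hFG]; rfl) t
  rw [← Pi.sub_apply, hdev]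
  simp only [LinearMap.toAddMonoidHom_coe, ← hFG, hiter,
    ← sum_lt_smul_sub_single_eq_rowSum _ (he _), map_sum, apply_ite, ite_apply, map_smul,
    map_zero, Finset.sum_apply, Pi.smul_apply, smul_eq_mul, Pi.zero_apply]

/-- Deviation identity between a linear continuous first-order diffusion process and any
discrete (rounded) version of it (Lemma 3). -/
theorem deviation_identity_linear_FOS
    (n : ℕ) (hn : 1 ≤ n)
    (C : (Fin n → ℝ) →ₗ[ℝ] Matrix (Fin n) (Fin n) ℝ)
    (hC : ∀ (x : Fin n → ℝ) (i j : Fin n), C x i j = -(C x j i))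
    (F : (Fin n → ℝ) → (Fin n → ℝ))
    (hF : ∀ (x : Fin n → ℝ) (i : Fin n), F x i = x i - ∑ j, C x i j)
    (x₀ : Fin n → ℝ)
    (e : ℕ → Matrix (Fin n) (Fin n) ℝ)
    (he : ∀ (s : ℕ) (i j : Fin n), e s i j = -(e s j i))
    (xC xD : ℕ → Fin n → ℝ)
    (hxC0 : xC 0 = x₀) (hxD0 : xD 0 = x₀)
    (hxC : ∀ t, xC (t + 1) = F (xC t))
    (hxD : ∀ t i, xD (t + 1) i = F (xD t) i + ∑ j, e t i j)
    (k : Fin n) (t : ℕ) :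
    xD t k - xC t k =
      ∑ s ∈ Finset.range t, ∑ i : Fin n, ∑ j : Fin n,
        if i < j then
          e s i j * (F^[t - 1 - s] (Pi.single i 1 - Pi.single j 1)) k
        else 0 :=
  deviation_identity_linear_FOS_general n C F hF x₀ e he xC xD hxC0 hxD0 hxC hxD k t
end

section
/- Closed form of the Q-eigenvalue recursion at the critical eigenvalue (from Lemma 6, part 2). Let λ ∈ (0,1) and β = 2/(1+√(1−λ²)). Define γ : ℕ → ℝ by γ(0) = 1, γ(1) = β·λ, and γ(t+2) = β·λ·γ(t+1) + (1−β)·γ(t). Then for every t ∈ ℕ: γ(t) = (√(β−1))^t · (t+1). (Note that β − 1 = λ²/(1+√(1−λ²))² ∈ (0,1), so the characteristic equation x² − βλx + (β−1) = 0 has the double root √(β−1).) -/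
/-- Closed form of the Q-eigenvalue recursion at the critical eigenvalue
(from Lemma 6, part 2): `γ(t) = (√(β−1))^t · (t+1)` for the optimal β. -/
theorem sos_gamma_closed_form
    (lam : ℝ) (hlam0 : 0 < lam) (hlam1 : lam < 1)
    (β : ℝ) (hβ : β = 2 / (1 + Real.sqrt (1 - lam ^ 2)))
    (γ : ℕ → ℝ) (hγ0 : γ 0 = 1) (hγ1 : γ 1 = β * lam)
    (hγ : ∀ t, γ (t + 2) = β * lam * γ (t + 1) + (1 - β) * γ t) :
    ∀ t : ℕ, γ t = (Real.sqrt (β - 1)) ^ t * (t + 1) := by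
  set s := Real.sqrt (1 - lam ^ 2) with hs
  have h1 : (0:ℝ) < 1 - lam ^ 2 := by nlinarith
  have hs0 : 0 < s := Real.sqrt_pos.mpr h1
  have hs2 : s ^ 2 = 1 - lam ^ 2 := Real.sq_sqrt h1.le
  have hs1 : s < 1 := by nlinarith [Real.sqrt_nonneg (1 - lam ^ 2)]
  have hden : (0:ℝ) < 1 + s := by linarith
  set r := Real.sqrt (β - 1) with hr
  have hbl : β * lam = 2 * lam / (1 + s) := by rw [hβ]; ring
  have hsq : (β * lam / 2) ^ 2 = β - 1 := by
    rw [hbl, hβ]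
    field_simp
    nlinarith
  have hrval : r = β * lam / 2 := by
    rw [hr, ← hsq]
    refine Real.sqrt_sq ?_
    rw [hbl]; positivity
  have hr2 : r ^ 2 = β - 1 := by rw [hrval]; exact hsq
  have key : ∀ t : ℕ, γ t = r ^ t * (t + 1) ∧ γ (t + 1) = r ^ (t + 1) * (t + 2) := by
    intro t
    induction t with
    | zero => constructor <;> simp [hγ0, hγ1, hrval] <;> ring
    | succ n ih =>
      obtain ⟨h1, h2⟩ := ih
      refine ⟨by rw [h2]; push_cast; ring, ?_⟩
      rw [hγ n, h1, h2]
      have hβl : β * lam = 2 * r := by rw [hrval]; ring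
      have h1β : 1 - β = -(r ^ 2) := by rw [hr2]; ring
      rw [hβl, h1β]
      push_cast
      ring
  intro t; exact (key t).1
end

section
/- Uniform bound on the Q-eigenvalue recursion for eigenvalues of modulus at most λ (from Lemma 6, part 2). Let λ ∈ (0,1), β = 2/(1+√(1−λ²)), and let α ∈ ℝ with |α| ≤ λ. Define γ : ℕ → ℝ by γ(0) = 1, γ(1) = β·α, and γ(t+2) = β·α·γ(t+1) + (1−β)·γ(t). Then for every t ∈ ℕ: |γ(t)| ≤ (√(β−1))^t · (t+1). -/
lemma aux_sin_nat_bound (θ : ℝ) (h : 0 ≤ Real.sin θ) :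
    ∀ n : ℕ, |Real.sin (n * θ)| ≤ n * Real.sin θ := by
  intro n
  induction n with
  | zero => simp
  | succ n ih =>
    have hrw : ((n + 1 : ℕ) : ℝ) * θ = (n : ℝ) * θ + θ := by push_cast; ring
    rw [hrw, Real.sin_add]
    have h1 : |Real.sin ((n:ℝ) * θ) * Real.cos θ| ≤ (n : ℝ) * Real.sin θ := by
      rw [abs_mul]
      calc |Real.sin ((n:ℝ)*θ)| * |Real.cos θ| ≤ |Real.sin ((n:ℝ)*θ)| * 1 :=
            mul_le_mul_of_nonneg_left (Real.abs_cos_le_one θ) (abs_nonneg _)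
        _ = |Real.sin ((n:ℝ)*θ)| := by ring
        _ ≤ (n:ℝ) * Real.sin θ := ih
    have h2 : |Real.cos ((n:ℝ) * θ) * Real.sin θ| ≤ Real.sin θ := by
      rw [abs_mul, abs_of_nonneg h]
      calc |Real.cos ((n:ℝ)*θ)| * Real.sin θ ≤ 1 * Real.sin θ :=
            mul_le_mul_of_nonneg_right (Real.abs_cos_le_one _) h
        _ = Real.sin θ := by ring
    calc |Real.sin ((n:ℝ)*θ) * Real.cos θ + Real.cos ((n:ℝ)*θ) * Real.sin θ|
        ≤ |Real.sin ((n:ℝ)*θ) * Real.cos θ| + |Real.cos ((n:ℝ)*θ) * Real.sin θ| := abs_add_le _ _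
      _ ≤ (n:ℝ) * Real.sin θ + Real.sin θ := add_le_add h1 h2
      _ = ((n+1 : ℕ) : ℝ) * Real.sin θ := by push_cast; ring

/-- Uniform bound on the Q-eigenvalue recursion for eigenvalues of modulus at most λ
(from Lemma 6, part 2): `|γ(t)| ≤ (√(β−1))^t · (t+1)` for the optimal β. -/
theorem sos_gamma_uniform_bound
    (lam : ℝ) (hlam0 : 0 < lam) (hlam1 : lam < 1)
    (β : ℝ) (hβ : β = 2 / (1 + Real.sqrt (1 - lam ^ 2)))
    (α : ℝ) (hα : |α| ≤ lam)
    (γ : ℕ → ℝ) (hγ0 : γ 0 = 1) (hγ1 : γ 1 = β * α)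
    (hγ : ∀ t, γ (t + 2) = β * α * γ (t + 1) + (1 - β) * γ t) :
    ∀ t : ℕ, |γ t| ≤ (Real.sqrt (β - 1)) ^ t * (t + 1) := by
  have hs2 : (0:ℝ) < 1 - lam ^ 2 := by nlinarith
  obtain ⟨s, hs⟩ : ∃ s, s = Real.sqrt (1 - lam ^ 2) := ⟨_, rfl⟩
  rw [← hs] at hβ
  have hs0 : 0 < s := hs ▸ Real.sqrt_pos.2 hs2
  have hssq : s ^ 2 = 1 - lam ^ 2 := hs ▸ Real.sq_sqrt hs2.le
  have h1s : (0:ℝ) < 1 + s := by linarith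
  have hβm : β - 1 = (lam / (1 + s)) ^ 2 := by
    rw [hβ]; field_simp; nlinarith
  obtain ⟨r, hr⟩ : ∃ r, r = Real.sqrt (β - 1) := ⟨_, rfl⟩
  simp only [← hr]
  have hrval : r = lam / (1 + s) := by
    rw [hr, hβm]; exact Real.sqrt_sq (by positivity)
  have hr0 : 0 < r := by rw [hrval]; positivity
  have hβpos : 0 < β := by rw [hβ]; positivity
  have h2r : β * lam = 2 * r := by rw [hβ, hrval]; field_simp
  obtain ⟨x, hx⟩ : ∃ x, x = β * α / (2 * r) := ⟨_, rfl⟩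
  have hx1 : |x| ≤ 1 := by
    rw [hx, abs_div, abs_mul, abs_of_pos hβpos, abs_of_pos (by linarith : (0:ℝ) < 2*r)]
    rw [div_le_one (by linarith)]
    calc β * |α| ≤ β * lam := mul_le_mul_of_nonneg_left hα hβpos.le
      _ = 2 * r := h2r
  have hβα : β * α = 2 * r * x := by rw [hx]; field_simp
  have h1β : 1 - β = -(r ^ 2) := by
    have : β - 1 = r ^ 2 := by rw [hrval]; exact hβm
    linarith
  obtain ⟨θ, hθ⟩ : ∃ θ, θ = Real.arccos x := ⟨_, rfl⟩
  have hcos : Real.cos θ = x := by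
    rw [hθ]; exact Real.cos_arccos (by linarith [abs_le.1 hx1]) (by linarith [abs_le.1 hx1])
  have hsin : Real.sin θ = Real.sqrt (1 - x ^ 2) := by rw [hθ]; exact Real.sin_arccos x
  have hsin0 : 0 ≤ Real.sin θ := by rw [hsin]; positivity
  obtain ⟨d, hdd⟩ : ∃ d : ℕ → ℝ, d = fun k : ℕ => Real.sin (((k:ℝ) + 1) * θ) := ⟨_, rfl⟩
  have hd0 : d 0 = Real.sin θ := by simp [hdd]
  have hd1 : d 1 = 2 * x * Real.sin θ := by
    simp only [hdd]
    rw [show ((1:ℕ):ℝ) + 1 = 2 by norm_num, show (2:ℝ) * θ = θ + θ by ring,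
      Real.sin_add, ← hcos]
    ring
  have hdrec : ∀ n : ℕ, d (n + 2) = 2 * x * d (n + 1) - d n := by
    intro n
    simp only [hdd]
    push_cast
    rw [show ((n:ℝ) + 2 + 1) * θ = ((n:ℝ) + 1 + 1) * θ + θ by ring,
        show ((n:ℝ) + 1) * θ = ((n:ℝ) + 1 + 1) * θ - θ by ring,
        Real.sin_add, Real.sin_sub, ← hcos]
    ring
  have key : ∀ t : ℕ, γ t * Real.sin θ = r ^ t * d t := by
    have main : ∀ t : ℕ, γ t * Real.sin θ = r ^ t * d t ∧
        γ (t + 1) * Real.sin θ = r ^ (t + 1) * d (t + 1) := by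
      intro t
      induction t with
      | zero =>
        refine ⟨by rw [hd0, hγ0]; ring, ?_⟩
        rw [hd1, hγ1, hβα]; ring
      | succ n ih =>
        obtain ⟨ih1, ih2⟩ := ih
        refine ⟨ih2, ?_⟩
        have hrec : γ (n + 2) * Real.sin θ =
            2 * r * x * (γ (n + 1) * Real.sin θ) - r ^ 2 * (γ n * Real.sin θ) := by
          rw [hγ n, hβα, h1β]; ring
        rw [hrec, ih1, ih2, hdrec n]
        ring
    exact fun t => (main t).1
  intro t
  rcases eq_or_lt_of_le hsin0 with hz | hpos
  · -- sin θ = 0, so x² = 1 and γ t = (x·r)^t (t+1)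
    have hx2 : x ^ 2 = 1 := by
      have h0 : Real.sqrt (1 - x ^ 2) = 0 := by rw [← hsin, ← hz]
      have hle : 0 ≤ 1 - x ^ 2 := by nlinarith [abs_le.1 hx1, sq_abs x]
      have := (Real.sqrt_eq_zero hle).1 h0
      linarith
    obtain ⟨g, hg⟩ : ∃ g : ℕ → ℝ, g = fun t : ℕ => (x * r) ^ t * ((t:ℝ) + 1) := ⟨_, rfl⟩
    have hg0 : g 0 = 1 := by rw [hg]; norm_num
    have hg1 : g 1 = 2 * r * x := by rw [hg]; push_cast; ring
    have hgrec : ∀ n : ℕ, g (n + 2) = 2 * r * x * g (n + 1) - r ^ 2 * g n := by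
      intro n
      rw [hg]
      push_cast
      linear_combination (-((x * r) ^ n * r ^ 2 * ((n:ℝ) + 1))) * hx2
    have exact_form : ∀ t : ℕ, γ t = g t := by
      have main : ∀ t : ℕ, γ t = g t ∧ γ (t + 1) = g (t + 1) := by
        intro t
        induction t with
        | zero => exact ⟨by rw [hγ0, hg0], by rw [hγ1, hβα, hg1]⟩
        | succ n ih =>
          obtain ⟨ih1, ih2⟩ := ih
          refine ⟨ih2, ?_⟩
          rw [hγ n, hβα, h1β, ih1, ih2, hgrec n]
          ring
      exact fun t => (main t).1
    have hxabs : |x| = 1 := by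
      have hfac : (|x| - 1) * (|x| + 1) = 0 := by
        linear_combination sq_abs x + hx2
      rcases mul_eq_zero.1 hfac with h | h
      · linarith
      · have := abs_nonneg x; linarith
    simp only [exact_form t, hg]
    rw [abs_mul, abs_pow, abs_mul, hxabs, one_mul, abs_of_pos hr0,
      abs_of_pos (show (0:ℝ) < (t:ℝ) + 1 by positivity)]
  · -- sin θ > 0
    have hb := aux_sin_nat_bound θ hsin0 (t + 1)
    have hdb : |d t| ≤ ((t:ℝ) + 1) * Real.sin θ := by
      simp only [hdd]
      push_cast at hb ⊢
      exact hb
    have h1 : |γ t| * Real.sin θ = r ^ t * |d t| := by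
      rw [← abs_of_pos hpos, ← abs_mul, key t, abs_mul, abs_of_pos (pow_pos hr0 t)]
    have h2 : |γ t| * Real.sin θ ≤ (r ^ t * ((t:ℝ) + 1)) * Real.sin θ := by
      rw [h1]
      calc r ^ t * |d t| ≤ r ^ t * (((t:ℝ) + 1) * Real.sin θ) :=
            mul_le_mul_of_nonneg_left hdb (pow_pos hr0 t).le
        _ = (r ^ t * ((t:ℝ) + 1)) * Real.sin θ := by ring
    exact le_of_mul_le_mul_right h2 hpos
end

section
/- Row deviation of the SOS matrices Q(t) (Lemma 6, part 4). Assume the heterogeneous diffusion-matrix assumptions and let β = 2/(1+√(1−λ²)). Let Q(t) be defined by the SOS recursion of matrices and let q(t) = Σ_i Q(t) i 0 denote the common column sum of Q(t) (all columns of Q(t) have equal sum since the columns of M sum to 1). Then for every node k and every t ∈ ℕ: Σ_{i=1}^{n} (Q(t) k i − (s k / s̄)·q(t))² ≤ 2 · smax · (β−1)^t · (t+1)². -/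
/-- SOS recursion of matrices: `Q(0) = I`, `Q(1) = β·M`,
`Q(t+2) = β·M·Q(t+1) + (1−β)·Q(t)`. -/
def sosQ {n : ℕ} (M : Matrix (Fin n) (Fin n) ℝ) (β : ℝ) :
    ℕ → Matrix (Fin n) (Fin n) ℝ
  | 0 => 1
  | 1 => β • M
  | (t + 2) => β • (M * sosQ M β (t + 1)) + (1 - β) • sosQ M β t

open Matrix

open Finset

namespace SosRowDevAux

variable {n : ℕ}

/-- Weighted squared norm. -/
def wN (s x : Fin n → ℝ) : ℝ := ∑ i, s i * x i ^ 2

/-- Weighted bilinear form. -/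
def wB (s x y : Fin n → ℝ) : ℝ := ∑ i, s i * (x i * y i)

lemma wB_self (s x : Fin n → ℝ) : wB s x x = wN s x :=
  Finset.sum_congr rfl fun i _ => by ring

lemma wN_nonneg (s : Fin n → ℝ) (hs : ∀ i, 0 ≤ s i) (x : Fin n → ℝ) : 0 ≤ wN s x :=
  Finset.sum_nonneg fun i _ => mul_nonneg (hs i) (sq_nonneg _)

lemma wN_comb (s x y : Fin n → ℝ) (a b : ℝ) :
    wN s (fun i => a * x i + b * y i)
      = a ^ 2 * wN s x + 2 * a * b * wB s x y + b ^ 2 * wN s y := by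
  simp only [wN, wB, Finset.mul_sum, ← Finset.sum_add_distrib]
  exact Finset.sum_congr rfl fun i _ => by ring

lemma wB_comb_left (s x y z : Fin n → ℝ) (a b : ℝ) :
    wB s (fun i => a * x i + b * y i) z = a * wB s x z + b * wB s y z := by
  simp only [wN, wB, Finset.mul_sum, ← Finset.sum_add_distrib]
  exact Finset.sum_congr rfl fun i _ => by ring

lemma wN_smul (s x : Fin n → ℝ) (a : ℝ) :
    wN s (fun i => a * x i) = a ^ 2 * wN s x := by
  simp only [wN, Finset.mul_sum]
  exact Finset.sum_congr rfl fun i _ => by ring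

lemma wB_smul_left (s x y : Fin n → ℝ) (a : ℝ) :
    wB s (fun i => a * x i) y = a * wB s x y := by
  simp only [wB, Finset.mul_sum]
  exact Finset.sum_congr rfl fun i _ => by ring

lemma wB_adj (s : Fin n → ℝ) (M : Matrix (Fin n) (Fin n) ℝ)
    (hsym : ∀ i j, s i * M j i = s j * M i j) (x y : Fin n → ℝ) :
    wB s (Matrix.vecMul x M) y = wB s x (Matrix.vecMul y M) := by
  simp only [wB, Matrix.vecMul, dotProduct, Finset.sum_mul, Finset.mul_sum]
  rw [Finset.sum_comm]
  refine Finset.sum_congr rfl fun i _ => Finset.sum_congr rfl fun j _ => ?_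
  linear_combination (x i * y j) * hsym j i

lemma wB_cs (s : Fin n → ℝ) (hs : ∀ i, 0 ≤ s i) (x y : Fin n → ℝ) :
    wB s x y ≤ Real.sqrt (wN s x) * Real.sqrt (wN s y) := by
  have h := Real.sum_mul_le_sqrt_mul_sqrt Finset.univ
    (fun i => Real.sqrt (s i) * x i) (fun i => Real.sqrt (s i) * y i)
  have e1 : ∀ i : Fin n, (Real.sqrt (s i) * x i) * (Real.sqrt (s i) * y i) = s i * (x i * y i) := by
    intro i
    have h' : Real.sqrt (s i) * Real.sqrt (s i) = s i := Real.mul_self_sqrt (hs i)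
    linear_combination (x i * y i) * h'
  have e2 : ∀ i : Fin n, (Real.sqrt (s i) * x i) ^ 2 = s i * x i ^ 2 := by
    intro i
    rw [mul_pow, Real.sq_sqrt (hs i)]
  have e3 : ∀ i : Fin n, (Real.sqrt (s i) * y i) ^ 2 = s i * y i ^ 2 := by
    intro i
    rw [mul_pow, Real.sq_sqrt (hs i)]
  calc wB s x y = ∑ i, (Real.sqrt (s i) * x i) * (Real.sqrt (s i) * y i) :=
        Finset.sum_congr rfl fun i _ => (e1 i).symm
    _ ≤ _ := h.trans_eq (by rw [Finset.sum_congr rfl fun i _ => e2 i,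
        Finset.sum_congr rfl fun i _ => e3 i]; rfl)


lemma wB_symm (s x y : Fin n → ℝ) : wB s x y = wB s y x :=
  Finset.sum_congr rfl fun i _ => by ring

lemma seq_bound (s : Fin n → ℝ) (hs : ∀ i, 0 ≤ s i)
    (M : Matrix (Fin n) (Fin n) ℝ)
    (hsym : ∀ i j, s i * M j i = s j * M i j)
    (lam β r : ℝ) (hlam0 : 0 ≤ lam)
    (hr0 : 0 ≤ r) (hr2 : r ^ 2 = β - 1) (hβlam : β * lam = 2 * r)
    (u : ℕ → Fin n → ℝ)
    (hu1 : u 1 = fun i => β * Matrix.vecMul (u 0) M i)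
    (hurec : ∀ t, u (t + 2) = fun i => β * Matrix.vecMul (u (t + 1)) M i + (1 - β) * u t i)
    (hgapu : ∀ t, wN s (Matrix.vecMul (u t) M) ≤ lam ^ 2 * wN s (u t)) :
    ∀ t, Real.sqrt (wN s (u t)) ≤ (t + 1) * r ^ t * Real.sqrt (wN s (u 0)) := by
  have hβ0 : (0:ℝ) ≤ β := by nlinarith [sq_nonneg r]
  -- the Lyapunov identity
  have key : ∀ t, wN s (u (t + 1)) + (β - 1) * wN s (u t)
      - β * wB s (u (t + 1)) (Matrix.vecMul (u t) M)
      = (β - 1) ^ (t + 1) * wN s (u 0) := by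
    intro t
    induction t with
    | zero =>
      rw [hu1, wN_smul, wB_smul_left, wB_self]
      ring
    | succ t ih =>
      have h12 : t + 1 + 1 = t + 2 := rfl
      rw [h12, hurec t, wN_comb, wB_comb_left, wB_self,
        wB_adj s M hsym (u (t + 1)) (u t),
        wB_symm s (u t) (Matrix.vecMul (u (t + 1)) M),
        wB_adj s M hsym (u (t + 1)) (u t)]
      linear_combination (β - 1) * ih
  intro t
  induction t with
  | zero => norm_num
  | succ t ih =>
    have h12 : t + 1 + 1 = t + 2 := rfl
    set a0 := Real.sqrt (wN s (u 0)) with ha0def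
    set a := Real.sqrt (wN s (u t)) with hadef
    set a' := Real.sqrt (wN s (u (t + 1))) with ha'def
    have ha0 : a0 ^ 2 = wN s (u 0) := Real.sq_sqrt (wN_nonneg s hs _)
    have ha : a ^ 2 = wN s (u t) := Real.sq_sqrt (wN_nonneg s hs _)
    have ha' : a' ^ 2 = wN s (u (t + 1)) := Real.sq_sqrt (wN_nonneg s hs _)
    have ha0n : 0 ≤ a0 := Real.sqrt_nonneg _
    have han : 0 ≤ a := Real.sqrt_nonneg _
    have ha'n : 0 ≤ a' := Real.sqrt_nonneg _
    -- Cauchy-Schwarz + spectral gap bound on the cross term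
    have hAu : Real.sqrt (wN s (Matrix.vecMul (u t) M)) ≤ lam * a := by
      have h1 : Real.sqrt (wN s (Matrix.vecMul (u t) M))
          ≤ Real.sqrt (lam ^ 2 * wN s (u t)) := Real.sqrt_le_sqrt (hgapu t)
      have h2 : Real.sqrt (lam ^ 2 * wN s (u t)) = lam * a := by
        rw [Real.sqrt_mul (sq_nonneg lam), Real.sqrt_sq hlam0, hadef]
      linarith [h1, h2.le, h2.ge]
    have hZ : wB s (u (t + 1)) (Matrix.vecMul (u t) M) ≤ a' * (lam * a) := by
      have h1 := wB_cs s hs (u (t + 1)) (Matrix.vecMul (u t) M)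
      have h2 : a' * Real.sqrt (wN s (Matrix.vecMul (u t) M)) ≤ a' * (lam * a) :=
        mul_le_mul_of_nonneg_left hAu ha'n
      exact h1.trans h2
    have hkey := key t
    have hpow : (β - 1) ^ (t + 1) = (r ^ (t + 1)) ^ 2 := by
      rw [← hr2, ← pow_mul, mul_comm, pow_mul]
    have hK0 : 0 ≤ r ^ (t + 1) * a0 := by positivity
    have h1 : (a' - r * a) ^ 2 = wN s (u (t + 1)) + (β - 1) * wN s (u t)
        - (β * lam) * (a' * a) := by
      linear_combination ha' + (β - 1) * ha + a ^ 2 * hr2 + (a' * a) * hβlam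
    have hsq : (a' - r * a) ^ 2 ≤ (r ^ (t + 1) * a0) ^ 2 := by
      have hβZ : β * wB s (u (t + 1)) (Matrix.vecMul (u t) M) ≤ β * (a' * (lam * a)) :=
        mul_le_mul_of_nonneg_left hZ hβ0
      have hrhs : (β - 1) ^ (t + 1) * wN s (u 0) = (r ^ (t + 1) * a0) ^ 2 := by
        rw [hpow, mul_pow, ha0]
      nlinarith [hβZ, hkey, h1, hrhs]
    have ha'le : a' ≤ r * a + r ^ (t + 1) * a0 := by
      nlinarith [hsq, hK0, sq_nonneg (a' - r * a)]
    have hra : r * a ≤ r * ((t + 1) * r ^ t * a0) := mul_le_mul_of_nonneg_left ih hr0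
    have hfin : a' ≤ ((t : ℝ) + 1 + 1) * r ^ (t + 1) * a0 := by
      have hexp : r * (((t : ℝ) + 1) * r ^ t * a0) + r ^ (t + 1) * a0
          = ((t : ℝ) + 1 + 1) * r ^ (t + 1) * a0 := by ring
      linarith [ha'le, hra, hexp.le, hexp.ge]
    have hcast : ((t + 1 : ℕ) : ℝ) + 1 = (t : ℝ) + 1 + 1 := by push_cast; ring
    rw [hcast]
    exact hfin


lemma vecMul_smulMat (v : Fin n → ℝ) (a : ℝ) (A : Matrix (Fin n) (Fin n) ℝ) :
    Matrix.vecMul v (a • A) = fun i => a * Matrix.vecMul v A i := by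
  funext i
  simp only [Matrix.vecMul, dotProduct, Matrix.smul_apply, smul_eq_mul, Finset.mul_sum]
  exact Finset.sum_congr rfl fun j _ => by ring

end SosRowDevAux

set_option maxHeartbeats 1000000 in
open SosRowDevAux in
/-- Row deviation of the SOS matrices `Q(t)` (Lemma 6, part 4):
`Σ_i (Q(t) k i − (s k / s̄)·q(t))² ≤ 2 · smax · (β−1)^t · (t+1)²`, where `q(t)` is the
common column sum of `Q(t)`. -/
theorem sosQ_row_deviation
    (n : ℕ) (hn : 1 ≤ n) (smax : ℝ) (s : Fin n → ℝ)
    (hs1 : ∀ i, 1 ≤ s i) (hsmax : ∀ i, s i ≤ smax)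
    (lam : ℝ) (hlam0 : 0 < lam) (hlam1 : lam < 1)
    (M : Matrix (Fin n) (Fin n) ℝ)
    (hcol : ∀ j, ∑ i, M i j = 1)
    (hMs : M.mulVec s = s)
    (hsym : ∀ i j, M i j / s i = M j i / s j)
    (hgap : ∀ w : Fin n → ℝ, ∑ i, w i * s i = 0 →
      ∑ i, s i * (Matrix.vecMul w M i) ^ 2 ≤ lam ^ 2 * ∑ i, s i * (w i) ^ 2)
    (β : ℝ) (hβ : β = 2 / (1 + Real.sqrt (1 - lam ^ 2)))
    (q : ℕ → ℝ) (hq : ∀ t, q t = ∑ i, sosQ M β t i ⟨0, hn⟩)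
    (k : Fin n) (t : ℕ) :
    ∑ i, (sosQ M β t k i - s k / (∑ j, s j) * q t) ^ 2
      ≤ 2 * smax * (β - 1) ^ t * (t + 1) ^ 2 := by
  classical
  have hs0 : ∀ i, (0:ℝ) < s i := fun i => lt_of_lt_of_le one_pos (hs1 i)
  have hSpos : (0:ℝ) < ∑ j, s j :=
    Finset.sum_pos (fun i _ => hs0 i) ⟨⟨0, hn⟩, Finset.mem_univ _⟩
  set S := ∑ j, s j with hSdef
  -- scalar facts about β, r
  have hl2 : (0:ℝ) ≤ 1 - lam ^ 2 := by nlinarith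
  set c := Real.sqrt (1 - lam ^ 2) with hcdef
  have hc2 : c ^ 2 = 1 - lam ^ 2 := Real.sq_sqrt hl2
  have hc0 : 0 ≤ c := Real.sqrt_nonneg _
  have hcl : c < 1 := by nlinarith [hc2, hc0, mul_pos hlam0 hlam0]
  have h1c : (0:ℝ) < 1 + c := by linarith
  have hβpos : 0 < β := by rw [hβ]; positivity
  have hβ1 : 1 < β := by rw [hβ, lt_div_iff₀ h1c]; linarith
  have hβc : β * (1 + c) = 2 := by rw [hβ]; field_simp
  set r := Real.sqrt (β - 1) with hrdef
  have hβ1' : (0:ℝ) ≤ β - 1 := by linarith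
  have hr2 : r ^ 2 = β - 1 := Real.sq_sqrt hβ1'
  have hr0 : 0 ≤ r := Real.sqrt_nonneg _
  have hkey : β - 1 = (β * lam / 2) ^ 2 := by
    linear_combination ((β * (1 + c) + 2 - 2 * β) / 4) * hβc - (β ^ 2 / 4) * hc2
  have hβlam : β * lam = 2 * r := by
    have h1 : r = β * lam / 2 := by
      rw [hrdef, hkey, Real.sqrt_sq (div_nonneg (mul_nonneg hβpos.le hlam0.le) (by norm_num))]
    rw [h1]; ring
  -- symmetry of the weighted form
  have hsym' : ∀ i j, s i * M j i = s j * M i j := by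
    intro i j
    have h2 := (div_eq_div_iff (ne_of_gt (hs0 j)) (ne_of_gt (hs0 i))).mp (hsym j i)
    linear_combination h2
  -- basic sosQ equations
  have hQ0 : sosQ M β 0 = 1 := rfl
  have hQ1 : sosQ M β 1 = β • M := rfl
  have hQrec : ∀ u : ℕ,
      sosQ M β (u + 2) = β • (M * sosQ M β (u + 1)) + (1 - β) • sosQ M β u := fun _ => rfl
  -- M commutes with sosQ
  have hcomm : ∀ u : ℕ, Commute M (sosQ M β u) := by
    intro u
    induction u using Nat.twoStepInduction with
    | zero => rw [hQ0]; exact Commute.one_right M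
    | one => rw [hQ1]; exact (Commute.refl M).smul_right β
    | more u ih1 ih2 =>
      rw [hQrec u]
      exact (((Commute.refl M).mul_right ih2).smul_right β).add_right (ih1.smul_right (1 - β))
  -- sosQ preserves the span of s
  have hQs : ∀ u : ℕ, ∃ d : ℝ, sosQ M β u *ᵥ s = d • s := by
    intro u
    induction u using Nat.twoStepInduction with
    | zero => exact ⟨1, by rw [hQ0, Matrix.one_mulVec, one_smul]⟩
    | one => exact ⟨β, by rw [hQ1, Matrix.smul_mulVec, hMs]⟩
    | more u ih1 ih2 =>
      obtain ⟨d1, hd1⟩ := ih1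
      obtain ⟨d2, hd2⟩ := ih2
      refine ⟨β * d2 + (1 - β) * d1, ?_⟩
      rw [hQrec u, Matrix.add_mulVec, Matrix.smul_mulVec, Matrix.smul_mulVec,
        ← Matrix.mulVec_mulVec, hd2, Matrix.mulVec_smul, hMs, hd1]
      funext i
      simp only [Pi.add_apply, Pi.smul_apply, smul_eq_mul]
      ring
  -- column sums of sosQ are independent of the column
  have hMcol : ∀ (A : Matrix (Fin n) (Fin n) ℝ) (j : Fin n),
      ∑ i, (M * A) i j = ∑ i, A i j := by
    intro A j
    simp only [Matrix.mul_apply]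
    rw [Finset.sum_comm]
    refine Finset.sum_congr rfl fun l _ => ?_
    rw [← Finset.sum_mul, hcol, one_mul]
  have hcolQ : ∀ u : ℕ, ∀ j j' : Fin n,
      ∑ i, sosQ M β u i j = ∑ i, sosQ M β u i j' := by
    intro u
    induction u using Nat.twoStepInduction with
    | zero => intro j j'; rw [hQ0]; simp [Matrix.one_apply]
    | one =>
      intro j j'
      rw [hQ1]
      simp only [Matrix.smul_apply, smul_eq_mul, ← Finset.mul_sum, hcol]
    | more u ih1 ih2 =>
      intro j j'
      rw [hQrec u]
      simp only [Matrix.add_apply, Matrix.smul_apply, smul_eq_mul,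
        Finset.sum_add_distrib, ← Finset.mul_sum]
      rw [hMcol _ j, hMcol _ j', ih2 j j', ih1 j j']
  have hqcol : ∀ u : ℕ, ∀ j : Fin n, ∑ i, sosQ M β u i j = q u :=
    fun u j => (hcolQ u j ⟨0, hn⟩).trans (hq u).symm
  -- the deviation vector and its evolution
  set w : Fin n → ℝ := fun i => (if i = k then (1:ℝ) else 0) - s k / S with hwdef
  have hws : ∑ i, w i * s i = 0 := by
    simp only [hwdef, sub_mul, ite_mul, one_mul, zero_mul]
    rw [Finset.sum_sub_distrib, Finset.sum_ite_eq' Finset.univ k s]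
    have : ∑ i, s k / S * s i = s k / S * S := by rw [← Finset.mul_sum]
    rw [this, div_mul_cancel₀ (s k) (ne_of_gt hSpos)]
    simp
  set uu : ℕ → Fin n → ℝ := fun t => Matrix.vecMul w (sosQ M β t) with huu
  have hu0 : uu 0 = w := by simp only [huu]; rw [hQ0, Matrix.vecMul_one]
  have hu1 : uu 1 = fun i => β * Matrix.vecMul (uu 0) M i := by
    simp only [huu]
    rw [hQ0, Matrix.vecMul_one, hQ1, vecMul_smulMat]
  have hurec : ∀ t, uu (t + 2)
      = fun i => β * Matrix.vecMul (uu (t + 1)) M i + (1 - β) * uu t i := by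
    intro t
    simp only [huu]
    rw [hQrec t, Matrix.vecMul_add, vecMul_smulMat, vecMul_smulMat,
      (hcomm (t + 1)).eq, ← Matrix.vecMul_vecMul]
    funext i
    simp
  have horth : ∀ t, ∑ i, uu t i * s i = 0 := by
    intro t
    obtain ⟨d, hd⟩ := hQs t
    have h1 : ∑ i, uu t i * s i = dotProduct w (sosQ M β t *ᵥ s) := by
      rw [Matrix.dotProduct_mulVec]
      rfl
    rw [h1, hd, dotProduct_smul]
    have h2 : dotProduct w s = 0 := hws
    rw [h2, smul_zero]
  have hgapu : ∀ t, wN s (Matrix.vecMul (uu t) M) ≤ lam ^ 2 * wN s (uu t) :=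
    fun t => hgap (uu t) (horth t)
  have main := seq_bound s (fun i => (hs0 i).le) M hsym' lam β r hlam0.le hr0 hr2 hβlam
    uu hu1 hurec hgapu t
  -- identify uu with the quantity in the goal
  have hui : ∀ i, uu t i = sosQ M β t k i - s k / S * q t := by
    intro i
    have h1 : uu t i = ∑ j, w j * sosQ M β t j i := by simp only [huu]; rfl
    rw [h1]
    simp only [hwdef, sub_mul, ite_mul, one_mul, zero_mul]
    rw [Finset.sum_sub_distrib,
      Finset.sum_ite_eq' Finset.univ k (fun j => sosQ M β t j i)]
    have h2 : ∑ j, s k / S * sosQ M β t j i = s k / S * q t := by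
      rw [← Finset.mul_sum, hqcol t i]
    rw [h2]
    simp
  -- bound on the initial weighted norm
  have hNw : wN s w ≤ smax := by
    have hSk : s k ≤ S := Finset.single_le_sum (fun i _ => (hs0 i).le) (Finset.mem_univ k)
    have hsplit : wN s w = s k * w k ^ 2 + ∑ i ∈ Finset.univ.erase k, s i * w i ^ 2 :=
      (Finset.add_sum_erase Finset.univ (fun i => s i * w i ^ 2) (Finset.mem_univ k)).symm
    have hrest : ∑ i ∈ Finset.univ.erase k, s i * w i ^ 2
        = (∑ i ∈ Finset.univ.erase k, s i) * (s k / S) ^ 2 := by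
      rw [Finset.sum_mul]
      refine Finset.sum_congr rfl fun i hi => ?_
      have hik : i ≠ k := Finset.ne_of_mem_erase hi
      simp only [hwdef]
      rw [if_neg hik]
      ring
    have hSsum : ∑ i ∈ Finset.univ.erase k, s i = S - s k := by
      have h3 := Finset.add_sum_erase Finset.univ s (Finset.mem_univ k)
      linarith [h3]
    have hwk : w k = 1 - s k / S := by simp [hwdef]
    rw [hsplit, hrest, hSsum, hwk]
    have heq : s k * (1 - s k / S) ^ 2 + (S - s k) * (s k / S) ^ 2 = s k - s k ^ 2 / S := by
      field_simp
      ring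
    rw [heq]
    have h1 : 0 ≤ s k ^ 2 / S := by positivity
    linarith [hsmax k]
  -- final chain
  have hgoal : ∑ i, (sosQ M β t k i - s k / S * q t) ^ 2 = ∑ i, (uu t i) ^ 2 :=
    Finset.sum_congr rfl fun i _ => by rw [hui i]
  rw [hgoal]
  have hnn : 0 ≤ wN s (uu t) := wN_nonneg s (fun i => (hs0 i).le) _
  have hnn0 : 0 ≤ wN s (uu 0) := wN_nonneg s (fun i => (hs0 i).le) _
  have h1 : ∑ i, (uu t i) ^ 2 ≤ wN s (uu t) := by
    refine Finset.sum_le_sum fun i _ => ?_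
    nlinarith [hs1 i, sq_nonneg (uu t i)]
  have h3 := mul_self_le_mul_self (Real.sqrt_nonneg (wN s (uu t))) main
  rw [Real.mul_self_sqrt hnn] at h3
  have h2 : wN s (uu t) ≤ ((t + 1 : ℝ) * r ^ t) ^ 2 * wN s (uu 0) := by
    calc wN s (uu t)
        ≤ ((t + 1 : ℝ) * r ^ t * Real.sqrt (wN s (uu 0)))
          * ((t + 1 : ℝ) * r ^ t * Real.sqrt (wN s (uu 0))) := h3
      _ = ((t + 1 : ℝ) * r ^ t) ^ 2
          * (Real.sqrt (wN s (uu 0)) * Real.sqrt (wN s (uu 0))) := by ring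
      _ = ((t + 1 : ℝ) * r ^ t) ^ 2 * wN s (uu 0) := by rw [Real.mul_self_sqrt hnn0]
  have hu0w : wN s (uu 0) = wN s w := by rw [hu0]
  have hr2t : (r ^ t) ^ 2 = (β - 1) ^ t := by
    rw [← pow_mul, mul_comm, pow_mul, hr2]
  have h4 : wN s (uu t) ≤ ((t : ℝ) + 1) ^ 2 * (β - 1) ^ t * wN s w := by
    calc wN s (uu t) ≤ ((t + 1 : ℝ) * r ^ t) ^ 2 * wN s (uu 0) := h2
      _ = ((t : ℝ) + 1) ^ 2 * (r ^ t) ^ 2 * wN s w := by rw [hu0w]; ring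
      _ = ((t : ℝ) + 1) ^ 2 * (β - 1) ^ t * wN s w := by rw [hr2t]
  have hb0 : (0:ℝ) ≤ (β - 1) ^ t := pow_nonneg hβ1' t
  have ht0 : (0:ℝ) ≤ ((t : ℝ) + 1) ^ 2 := sq_nonneg _
  have hsmax0 : (0:ℝ) ≤ smax := le_trans (le_trans zero_le_one (hs1 k)) (hsmax k)
  have h5 : ((t : ℝ) + 1) ^ 2 * (β - 1) ^ t * wN s w
      ≤ ((t : ℝ) + 1) ^ 2 * (β - 1) ^ t * smax :=
    mul_le_mul_of_nonneg_left hNw (mul_nonneg ht0 hb0)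
  nlinarith [h1, h4, h5, mul_nonneg (mul_nonneg hsmax0 hb0) ht0]
end

section
/- Deviation bound between discrete and continuous second-order schemes under arbitrary bounded rounding (Theorem 3). Assume the heterogeneous diffusion-matrix assumptions and the graph support condition for a simple graph G with maximum degree at most d, and let β = 2/(1+√(1−λ²)). Let Q(t) be defined by the SOS recursion of matrices. Let e : ℕ → Matrix (Fin n) (Fin n) ℝ be any family of rounding-error matrices with (e s) i j = −(e s) j i, |(e s) i j| ≤ 1 for all s, i, j, and (e s) i j = 0 whenever {i,j} is not an edge of G. Then for every node k and every round t: |Σ_{s=0}^{t} (1/2)·Σ_{i,j adjacent in G} (Q(s) k i − Q(s) k j)·(e (t−s)) i j| ≤ 16 · d · √(2 · n · smax) / (1 − λ). (By the deviation identity for linear processes, the left-hand side equals the deviation |xD(k, t+1) − xSOS(k, t+1)| between the discrete SOS with these rounding errors and the continuous SOS, so the discrete second-order scheme deviates from its continuous counterpart by at most O(d·√(n·smax)/(1−λ)).) -/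
open Finset Matrix

section SOSOrbit

variable {V : Type*} [AddCommGroup V] [Module ℝ V]

structure IsSOSOrbit (A : V →ₗ[ℝ] V) (β : ℝ) (v : ℕ → V) : Prop where
  one : v 1 = β • A (v 0)
  add_two : ∀ u, v (u + 2) = β • A (v (u + 1)) + (1 - β) • v u

variable {B : LinearMap.BilinForm ℝ V} {A : V →ₗ[ℝ] V} {β r lam : ℝ} {v : ℕ → V}

namespace IsSOSOrbit

theorem energy_eq (hB : B.IsSymm) (hA : LinearMap.IsSelfAdjoint B A) (hβ : β = 1 + r ^ 2)
    (hv : IsSOSOrbit A β v) (u : ℕ) :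
    B (v (u + 1)) (v (u + 1)) + r ^ 2 * B (v u) (v u) - β * B (v (u + 1)) (A (v u)) =
      (r ^ 2) ^ (u + 1) * B (v 0) (v 0) := by
  induction u with
  | zero =>
    simp only [zero_add, hv.one, map_smul, LinearMap.smul_apply, smul_eq_mul]
    ring
  | succ u ih =>
    have hsymm : B (v u) (A (v (u + 1))) = B (v (u + 1)) (A (v u)) := by
      rw [← hA, hB.eq]
    rw [pow_succ' (r ^ 2) (u + 1), mul_assoc, ← ih, hv.add_two, hβ]
    simp only [map_add, map_smul, LinearMap.add_apply, LinearMap.smul_apply, smul_eq_mul, hsymm,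
      hA (v (u + 1)) (v u)]
    ring

theorem sqrt_succ_le (hB : B.IsSymm) (hpos : ∀ x, 0 ≤ B x x) (hA : LinearMap.IsSelfAdjoint B A)
    (hβ : β = 1 + r ^ 2) (hr : 0 ≤ r) (hlam : 0 ≤ lam) (hβlam : β * lam = 2 * r)
    (hv : IsSOSOrbit A β v) (hcontr : ∀ u, B (A (v u)) (A (v u)) ≤ lam ^ 2 * B (v u) (v u))
    (u : ℕ) :
    √(B (v (u + 1)) (v (u + 1))) ≤ r * √(B (v u) (v u)) + r ^ (u + 1) * √(B (v 0) (v 0)) := by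
  have hcs :
      B (v (u + 1)) (A (v u)) ≤ √(B (v (u + 1)) (v (u + 1))) * (lam * √(B (v u) (v u))) :=
    calc B (v (u + 1)) (A (v u))
      _ ≤ √(B (v (u + 1)) (v (u + 1)) * B (A (v u)) (A (v u))) :=
        (le_abs_self _).trans <| Real.abs_le_sqrt <|
          B.apply_sq_le_of_symm hpos (LinearMap.BilinForm.isSymm_iff.mp hB) _ _
      _ ≤ √(B (v (u + 1)) (v (u + 1))) * (lam * √(B (v u) (v u))) := by
        rw [Real.sqrt_mul (hpos _), ← Real.sqrt_sq hlam, ← Real.sqrt_mul (sq_nonneg _)]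
        gcongr
        exact hcontr u
  have hE := hv.energy_eq hB hA hβ u
  rw [← Real.sq_sqrt (hpos (v (u + 1))), ← Real.sq_sqrt (hpos (v u)),
    ← Real.sq_sqrt (hpos (v 0))] at hE
  set g₁ := √(B (v (u + 1)) (v (u + 1)))
  set g₀ := √(B (v u) (v u))
  have hcross : β * B (v (u + 1)) (A (v u)) ≤ 2 * r * (g₁ * g₀) :=
    calc β * B (v (u + 1)) (A (v u))
      _ ≤ β * (g₁ * (lam * g₀)) := by gcongr; rw [hβ]; positivity
      _ = 2 * r * (g₁ * g₀) := by rw [← hβlam]; ring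
  have hlow : (g₁ - r * g₀) ^ 2 ≤ (r ^ (u + 1) * √(B (v 0) (v 0))) ^ 2 :=
    calc (g₁ - r * g₀) ^ 2
      _ ≤ g₁ ^ 2 + r ^ 2 * g₀ ^ 2 - β * B (v (u + 1)) (A (v u)) := by linarith
      _ = (r ^ (u + 1) * √(B (v 0) (v 0))) ^ 2 := by rw [hE]; ring
  linarith [abs_le_of_sq_le_sq hlow (by positivity), le_abs_self (g₁ - r * g₀)]

theorem sqrt_le (hB : B.IsSymm) (hpos : ∀ x, 0 ≤ B x x) (hA : LinearMap.IsSelfAdjoint B A)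
    (hβ : β = 1 + r ^ 2) (hr : 0 ≤ r) (hlam : 0 ≤ lam) (hβlam : β * lam = 2 * r)
    (hv : IsSOSOrbit A β v) (hcontr : ∀ u, B (A (v u)) (A (v u)) ≤ lam ^ 2 * B (v u) (v u))
    (u : ℕ) : √(B (v u) (v u)) ≤ (u + 1) * r ^ u * √(B (v 0) (v 0)) := by
  induction u with
  | zero => simp
  | succ u ih =>
    calc √(B (v (u + 1)) (v (u + 1)))
      _ ≤ r * √(B (v u) (v u)) + r ^ (u + 1) * √(B (v 0) (v 0)) :=
        hv.sqrt_succ_le hB hpos hA hβ hr hlam hβlam hcontr u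
      _ ≤ r * ((u + 1) * r ^ u * √(B (v 0) (v 0))) + r ^ (u + 1) * √(B (v 0) (v 0)) := by
        gcongr
      _ = (↑(u + 1) + 1) * r ^ (u + 1) * √(B (v 0) (v 0)) := by
        push_cast
        ring

theorem apply_eq_zero_of_apply_eq_self (hA : LinearMap.IsSelfAdjoint B A) {e : V} (he : A e = e)
    (hv : IsSOSOrbit A β v) (h₀ : B (v 0) e = 0) (u : ℕ) : B (v u) e = 0 := by
  have hAe : ∀ x, B (A x) e = B x e := fun x => by rw [hA, he]
  induction u using Nat.twoStepInduction with
  | zero => exact h₀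
  | one => simp [hv.one, hAe, h₀]
  | more u ih₀ ih₁ => simp [hv.add_two, hAe, ih₀, ih₁]

end IsSOSOrbit

end SOSOrbit

namespace LinearMap.BilinForm

variable {V : Type*} [AddCommGroup V] [Module ℝ V] (B : LinearMap.BilinForm ℝ V) (x e : V)

theorem apply_sub_div_smul_apply_eq_zero (he : B e e ≠ 0) :
    B (x - (B x e / B e e) • e) e = 0 := by
  simp [div_mul_cancel₀ _ he]

theorem apply_sub_div_smul_self_le (hB : B.IsSymm) (he : 0 ≤ B e e) :
    B (x - (B x e / B e e) • e) (x - (B x e / B e e) • e) ≤ B x x := by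
  rcases he.eq_or_lt with he | he
  · simp [← he]
  have : B (x - (B x e / B e e) • e) (x - (B x e / B e e) • e) = B x x - B x e ^ 2 / B e e := by
    simp only [map_sub, map_smul, LinearMap.sub_apply, LinearMap.smul_apply, smul_eq_mul,
      hB.eq e x]
    field_simp
    ring
  rw [this]
  have := div_nonneg (sq_nonneg (B x e)) he.le
  linarith

end LinearMap.BilinForm

theorem sum_range_succ_mul_pow_le {r : ℝ} (hr₀ : 0 ≤ r) (hr₁ : r < 1) (T : ℕ) :
    ∑ u ∈ range T, ((u : ℝ) + 1) * r ^ u ≤ 1 / (1 - r) ^ 2 := by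
  have hnorm : ‖r‖ < 1 := by rwa [Real.norm_of_nonneg hr₀]
  have hsum := (hasSum_coe_mul_geometric_of_norm_lt_one hnorm).add
    (hasSum_geometric_of_lt_one hr₀ hr₁)
  have hval : r / (1 - r) ^ 2 + (1 - r)⁻¹ = 1 / (1 - r) ^ 2 := by
    field_simp [(sub_pos.2 hr₁).ne']
    ring
  rw [hval] at hsum
  refine (sum_le_hasSum (range T) (fun u _ => by positivity) hsum).trans_eq' ?_
  exact sum_congr rfl fun u _ => by ring

noncomputable def sosRate (lam : ℝ) : ℝ := lam / (1 + √(1 - lam ^ 2))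

theorem sosRate_nonneg {lam : ℝ} (h : 0 ≤ lam) : 0 ≤ sosRate lam := by
  unfold sosRate
  positivity

theorem one_add_sosRate_sq {lam : ℝ} (h : lam ^ 2 ≤ 1) :
    1 + sosRate lam ^ 2 = 2 / (1 + √(1 - lam ^ 2)) := by
  have hσ : √(1 - lam ^ 2) ^ 2 = 1 - lam ^ 2 := Real.sq_sqrt (by linarith)
  have : 0 < 1 + √(1 - lam ^ 2) := by positivity
  unfold sosRate
  field_simp
  nlinarith

theorem sum_range_succ_mul_sosRate_pow_le {lam : ℝ} (h₀ : 0 ≤ lam) (h₁ : lam < 1) (T : ℕ) :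
    ∑ u ∈ range T, ((u : ℝ) + 1) * sosRate lam ^ u ≤ 4 / (1 - lam) := by
  set σ := √(1 - lam ^ 2)
  have hσsq : σ ^ 2 = 1 - lam ^ 2 := Real.sq_sqrt (by nlinarith)
  have hσ₀ : 0 ≤ σ := Real.sqrt_nonneg _
  have hrσ : sosRate lam * (1 + σ) = lam := div_mul_cancel₀ _ (by positivity)
  have hr₀ := sosRate_nonneg h₀
  have hσr : σ / 2 ≤ 1 - sosRate lam := by nlinarith
  have hr₁ : sosRate lam < 1 := by nlinarith
  refine (sum_range_succ_mul_pow_le hr₀ hr₁ T).trans ?_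
  rw [div_le_div_iff₀ (by nlinarith) (by linarith)]
  nlinarith

section DiagonalForm

variable {ι : Type*} [Fintype ι] [DecidableEq ι] (s x : ι → ℝ)

theorem Matrix.toBilin'_diagonal_apply (y : ι → ℝ) :
    toBilin' (diagonal s) x y = ∑ i, s i * x i * y i := by
  simp only [toBilin'_apply', dotProduct, mulVec_diagonal]
  exact sum_congr rfl fun i _ => by ring

theorem Matrix.toBilin'_diagonal_apply_self : toBilin' (diagonal s) x x = ∑ i, s i * x i ^ 2 := by
  simp only [toBilin'_diagonal_apply, sq, mul_assoc]

theorem Matrix.toBilin'_diagonal_apply_one : toBilin' (diagonal s) x 1 = ∑ i, x i * s i := by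
  simp only [toBilin'_diagonal_apply, Pi.one_apply, mul_one, mul_comm]

theorem Matrix.toBilin'_diagonal_apply_self_nonneg (hs : ∀ i, 0 ≤ s i) :
    0 ≤ toBilin' (diagonal s) x x := by
  rw [toBilin'_diagonal_apply_self]
  exact sum_nonneg fun i _ => mul_nonneg (hs i) (sq_nonneg _)

end DiagonalForm

theorem Matrix.isSelfAdjoint_toBilin'_vecMulLinear {ι R : Type*} [Fintype ι] [DecidableEq ι]
    [CommRing R] {D M : Matrix ι ι R} (hD : D.IsSymm) (hMD : (M * D).IsSymm) :
    LinearMap.IsSelfAdjoint (toBilin' D) (vecMulLinear M) := by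
  intro x y
  rw [vecMulLinear_apply, vecMulLinear_apply, toBilin'_apply', toBilin'_apply',
    ← dotProduct_mulVec, mulVec_mulVec, ← mulVec_transpose, mulVec_mulVec]
  congr 2
  rw [← hMD.eq, transpose_mul, hD.eq]

theorem Matrix.isSymm_mul_diagonal_of_div_eq_div {ι : Type*} [Fintype ι] [DecidableEq ι]
    {s : ι → ℝ} {M : Matrix ι ι ℝ} (hs : ∀ i, s i ≠ 0) (h : ∀ i j, M i j / s i = M j i / s j) :
    (M * diagonal s).IsSymm := by
  ext i j
  have := h j i
  field_simp [hs i, hs j] at this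
  simp only [transpose_apply, mul_diagonal]
  linarith

theorem sosQ_mul_comm {n : ℕ} (M : Matrix (Fin n) (Fin n) ℝ) (β : ℝ) (u : ℕ) :
    M * sosQ M β u = sosQ M β u * M := by
  induction u using Nat.twoStepInduction with
  | zero => simp [sosQ]
  | one => simp [sosQ]
  | more u ih₀ ih₁ =>
    rw [sosQ, Matrix.mul_add, Matrix.add_mul, Matrix.mul_smul, Matrix.smul_mul, Matrix.mul_smul,
      Matrix.smul_mul, ih₀, ih₁, ← Matrix.mul_assoc, ih₁]

theorem vecMul_sosQ_of_vecMul_eq_self {n : ℕ} {M : Matrix (Fin n) (Fin n) ℝ} {x : Fin n → ℝ}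
    (hx : x ᵥ* M = x) (β : ℝ) (u : ℕ) : ∃ c : ℝ, x ᵥ* sosQ M β u = c • x := by
  induction u using Nat.twoStepInduction with
  | zero => exact ⟨1, by simp [sosQ]⟩
  | one => exact ⟨β, by simp [sosQ, vecMul_smul, hx]⟩
  | more u ih₀ ih₁ =>
    obtain ⟨c₀, hc₀⟩ := ih₀
    obtain ⟨c₁, hc₁⟩ := ih₁
    refine ⟨β * c₁ + (1 - β) * c₀, ?_⟩
    simp only [sosQ, vecMul_add, vecMul_smul, ← vecMul_vecMul, hx, hc₀, hc₁, add_smul, mul_smul]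

theorem isSOSOrbit_vecMul_sosQ {n : ℕ} (M : Matrix (Fin n) (Fin n) ℝ) (β : ℝ) (w : Fin n → ℝ) :
    IsSOSOrbit (vecMulLinear M) β (fun u => w ᵥ* sosQ M β u) where
  one := by simp [sosQ, vecMul_smul]
  add_two u := by
    simp only [sosQ, vecMulLinear_apply, vecMul_add, vecMul_smul, sosQ_mul_comm, vecMul_vecMul]

theorem exists_vecMul_sosQ_eq_row_sub {n : ℕ} {M : Matrix (Fin n) (Fin n) ℝ}
    (hM : (1 : Fin n → ℝ) ᵥ* M = 1) (β a : ℝ) (u : ℕ) (k : Fin n) :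
    ∃ c : ℝ, ∀ i, ((Pi.single k 1 - a • 1) ᵥ* sosQ M β u) i = sosQ M β u k i - c := by
  obtain ⟨c, hc⟩ := vecMul_sosQ_of_vecMul_eq_self hM β u
  exact ⟨a * c, fun i => by simp [sub_vecMul, smul_vecMul, hc, single_vecMul]⟩

theorem sum_abs_le_sqrt_card_mul_sqrt {ι : Type*} [Fintype ι] {s : ι → ℝ} (hs : ∀ i, 1 ≤ s i)
    (x : ι → ℝ) : ∑ i, |x i| ≤ √(Fintype.card ι) * √(∑ i, s i * x i ^ 2) := by
  rw [← Real.sqrt_mul (Nat.cast_nonneg _)]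
  refine (le_abs_self _).trans (Real.abs_le_sqrt ?_)
  calc (∑ i, |x i|) ^ 2
    _ ≤ Fintype.card ι * ∑ i, |x i| ^ 2 := sq_sum_le_card_mul_sum_sq
    _ ≤ Fintype.card ι * ∑ i, s i * x i ^ 2 := by
      gcongr with i
      rw [sq_abs]
      exact le_mul_of_one_le_left (sq_nonneg _) (hs i)

theorem sqrt_sum_mul_vecMul_sosQ_sq_le {n : ℕ} {s : Fin n → ℝ} {M : Matrix (Fin n) (Fin n) ℝ}
    {lam β : ℝ} (hs : ∀ i, 0 < s i) (hone : (1 : Fin n → ℝ) ᵥ* M = 1)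
    (hsym : ∀ i j, M i j / s i = M j i / s j)
    (hgap : ∀ w : Fin n → ℝ, ∑ i, w i * s i = 0 →
      ∑ i, s i * (w ᵥ* M) i ^ 2 ≤ lam ^ 2 * ∑ i, s i * w i ^ 2)
    (hlam₀ : 0 ≤ lam) (hlam₁ : lam ≤ 1) (hβ : β = 2 / (1 + √(1 - lam ^ 2)))
    {w : Fin n → ℝ} (hw : ∑ i, w i * s i = 0) (u : ℕ) :
    √(∑ i, s i * (w ᵥ* sosQ M β u) i ^ 2) ≤
      (u + 1) * sosRate lam ^ u * √(∑ i, s i * w i ^ 2) := by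
  set B := toBilin' (diagonal s)
  have hMB : LinearMap.IsSelfAdjoint B (vecMulLinear M) :=
    isSelfAdjoint_toBilin'_vecMulLinear (isSymm_diagonal s)
      (isSymm_mul_diagonal_of_div_eq_div (fun i => (hs i).ne') hsym)
  have hv := isSOSOrbit_vecMul_sosQ M β w
  have hv₀ : w ᵥ* sosQ M β 0 = w := by simp [sosQ]
  have hcontr u : B (vecMulLinear M (w ᵥ* sosQ M β u)) (vecMulLinear M (w ᵥ* sosQ M β u)) ≤
      lam ^ 2 * B (w ᵥ* sosQ M β u) (w ᵥ* sosQ M β u) := by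
    have hmean := hv.apply_eq_zero_of_apply_eq_self hMB hone
      (by rwa [hv₀, toBilin'_diagonal_apply_one]) u
    rw [toBilin'_diagonal_apply_one] at hmean
    rw [toBilin'_diagonal_apply_self, toBilin'_diagonal_apply_self]
    exact hgap _ hmean
  have key := hv.sqrt_le (isSymm_toBilin'_iff_isSymm.2 (isSymm_diagonal s))
    (toBilin'_diagonal_apply_self_nonneg s · fun i => (hs i).le) hMB
    (hβ.trans (one_add_sosRate_sq (by nlinarith)).symm) (sosRate_nonneg hlam₀) hlam₀
    (by rw [hβ, sosRate]; ring) hcontr u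
  rwa [hv₀, toBilin'_diagonal_apply_self, toBilin'_diagonal_apply_self] at key

theorem exists_sum_abs_sosQ_row_sub_le {n : ℕ} {smax lam β : ℝ} {s : Fin n → ℝ}
    {M : Matrix (Fin n) (Fin n) ℝ} (hs1 : ∀ i, 1 ≤ s i) (hsmax : ∀ i, s i ≤ smax)
    (hcol : ∀ j, ∑ i, M i j = 1) (hsym : ∀ i j, M i j / s i = M j i / s j)
    (hgap : ∀ w : Fin n → ℝ, ∑ i, w i * s i = 0 →
      ∑ i, s i * (w ᵥ* M) i ^ 2 ≤ lam ^ 2 * ∑ i, s i * w i ^ 2)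
    (hlam₀ : 0 ≤ lam) (hlam₁ : lam ≤ 1) (hβ : β = 2 / (1 + √(1 - lam ^ 2))) (k : Fin n) :
    ∃ c : ℕ → ℝ, ∀ u, ∑ i, |sosQ M β u k i - c u| ≤
      √n * √smax * ((u + 1) * sosRate lam ^ u) := by
  have hs : ∀ i, 0 < s i := fun i => one_pos.trans_le (hs1 i)
  set B := toBilin' (diagonal s)
  set a := B (Pi.single k 1) 1 / B 1 1
  set w : Fin n → ℝ := Pi.single k 1 - a • 1
  have hone : (1 : Fin n → ℝ) ᵥ* M = 1 := funext fun j => by simp [vecMul, dotProduct, hcol]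
  have hmean : ∑ i, w i * s i = 0 := by
    rw [← toBilin'_diagonal_apply_one]
    refine B.apply_sub_div_smul_apply_eq_zero _ _ ?_
    rw [toBilin'_diagonal_apply_self]
    exact (sum_pos (fun i _ => by simpa using hs i) ⟨k, mem_univ k⟩).ne'
  have hw : √(∑ i, s i * w i ^ 2) ≤ √smax := by
    refine Real.sqrt_le_sqrt ?_
    rw [← toBilin'_diagonal_apply_self]
    refine (B.apply_sub_div_smul_self_le _ _ (isSymm_toBilin'_iff_isSymm.2 (isSymm_diagonal s))
      (toBilin'_diagonal_apply_self_nonneg s _ fun i => (hs i).le)).trans ?_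
    simpa [B, toBilin'_diagonal_apply_self, Pi.single_apply] using hsmax k
  choose c hc using fun u => exists_vecMul_sosQ_eq_row_sub hone β a u k
  refine ⟨c, fun u => ?_⟩
  have hr := sosRate_nonneg hlam₀
  calc ∑ i, |sosQ M β u k i - c u|
    _ = ∑ i, |(w ᵥ* sosQ M β u) i| := by simp only [w, hc]
    _ ≤ √n * √(∑ i, s i * (w ᵥ* sosQ M β u) i ^ 2) := by
      simpa using sum_abs_le_sqrt_card_mul_sqrt hs1 (w ᵥ* sosQ M β u)
    _ ≤ √n * ((u + 1) * sosRate lam ^ u * √smax) := by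
      gcongr
      exact (sqrt_sum_mul_vecMul_sosQ_sq_le hs hone hsym hgap hlam₀ hlam₁ hβ hmean u).trans
        (by gcongr)
    _ = √n * √smax * ((u + 1) * sosRate lam ^ u) := by ring

theorem SimpleGraph.sum_ite_adj_eq_degree_mul {V : Type*} [Fintype V] (G : SimpleGraph V)
    [DecidableRel G.Adj] (i : V) (a : ℝ) :
    ∑ j, (if G.Adj i j then a else 0) = G.degree i * a := by
  rw [sum_ite, sum_const_zero, add_zero, sum_const, nsmul_eq_mul, ← G.neighborFinset_eq_filter,
    card_neighborFinset_eq_degree]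

theorem SimpleGraph.abs_half_sum_adj_sub_mul_le {V : Type*} [Fintype V] (G : SimpleGraph V)
    [DecidableRel G.Adj] {d : ℕ} (hdeg : G.maxDegree ≤ d) (x : V → ℝ) (e : Matrix V V ℝ)
    (he : ∀ i j, |e i j| ≤ 1) :
    |(1 / 2 : ℝ) * ∑ i, ∑ j, if G.Adj i j then (x i - x j) * e i j else 0| ≤
      d * ∑ i, |x i| := by
  have hterm : ∀ i j, |if G.Adj i j then (x i - x j) * e i j else 0| ≤
      (if G.Adj i j then |x i| else 0) + (if G.Adj j i then |x j| else 0) := by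
    intro i j
    split_ifs with h h' h'
    · rw [abs_mul]
      exact (mul_le_of_le_one_right (abs_nonneg _) (he i j)).trans (abs_sub _ _)
    · exact absurd h.symm h'
    · exact absurd h'.symm h
    · simp
  have hswap : ∑ i, ∑ j, (if G.Adj j i then |x j| else 0) =
      ∑ i, ∑ j, (if G.Adj i j then |x i| else 0) := sum_comm
  rw [abs_mul, abs_of_pos one_half_pos, mul_sum]
  calc 1 / 2 * |∑ i, ∑ j, if G.Adj i j then (x i - x j) * e i j else 0|
    _ ≤ 1 / 2 * ∑ i, ∑ j,
          ((if G.Adj i j then |x i| else 0) + (if G.Adj j i then |x j| else 0)) := by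
      gcongr
      exact (abs_sum_le_sum_abs _ _).trans <| sum_le_sum fun i _ =>
        (abs_sum_le_sum_abs _ _).trans <| sum_le_sum fun j _ => hterm i j
    _ = ∑ i, G.degree i * |x i| := by
      simp only [sum_add_distrib, hswap, G.sum_ite_adj_eq_degree_mul]
      ring
    _ ≤ ∑ i, d * |x i| := by
      gcongr with i
      exact_mod_cast (G.degree_le_maxDegree i).trans hdeg

theorem sos_arbitrary_rounding_deviation_general
    (n d : ℕ) (smax : ℝ) (s : Fin n → ℝ)
    (hs1 : ∀ i, 1 ≤ s i) (hsmax : ∀ i, s i ≤ smax)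
    (lam : ℝ) (hlam0 : 0 < lam) (hlam1 : lam < 1)
    (M : Matrix (Fin n) (Fin n) ℝ)
    (hcol : ∀ j, ∑ i, M i j = 1)
    (hsym : ∀ i j, M i j / s i = M j i / s j)
    (hgap : ∀ w : Fin n → ℝ, ∑ i, w i * s i = 0 →
      ∑ i, s i * (Matrix.vecMul w M i) ^ 2 ≤ lam ^ 2 * ∑ i, s i * (w i) ^ 2)
    (G : SimpleGraph (Fin n)) [DecidableRel G.Adj]
    (hdeg : G.maxDegree ≤ d)
    (β : ℝ) (hβ : β = 2 / (1 + Real.sqrt (1 - lam ^ 2)))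
    (e : ℕ → Matrix (Fin n) (Fin n) ℝ)
    (hbdd : ∀ s i j, |e s i j| ≤ 1)
    (k : Fin n) (t : ℕ) :
    |∑ u ∈ Finset.range (t + 1), (1 / 2 : ℝ) * ∑ i : Fin n, ∑ j : Fin n,
        if G.Adj i j then (sosQ M β u k i - sosQ M β u k j) * e (t - u) i j else 0|
      ≤ 16 * d * Real.sqrt (2 * n * smax) / (1 - lam) := by
  obtain ⟨c, hc⟩ :=
    exists_sum_abs_sosQ_row_sub_le hs1 hsmax hcol hsym hgap hlam0.le hlam1.le hβ k
  have hround u : |(1 / 2 : ℝ) * ∑ i, ∑ j,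
      if G.Adj i j then (sosQ M β u k i - sosQ M β u k j) * e (t - u) i j else 0| ≤
        d * (√n * √smax * ((u + 1) * sosRate lam ^ u)) := by
    simpa only [sub_sub_sub_cancel_right] using
      (G.abs_half_sum_adj_sub_mul_le hdeg (fun i => sosQ M β u k i - c u) _ (hbdd (t - u))).trans
        (by gcongr; exact hc u)
  have hsqrt : √n * √smax ≤ √(2 * n * smax) := by
    rw [← Real.sqrt_mul (Nat.cast_nonneg _)]
    exact Real.sqrt_le_sqrt (by nlinarith [hs1 k, hsmax k, Nat.cast_nonneg (α := ℝ) n])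
  calc _ ≤ ∑ u ∈ range (t + 1), d * (√n * √smax * ((u + 1) * sosRate lam ^ u)) :=
        (abs_sum_le_sum_abs _ _).trans (sum_le_sum fun u _ => hround u)
    _ ≤ d * (√n * √smax * (4 / (1 - lam))) := by
      rw [← mul_sum, ← mul_sum]
      gcongr
      exact sum_range_succ_mul_sosRate_pow_le hlam0.le hlam1 _
    _ ≤ 16 * d * √(2 * n * smax) / (1 - lam) := by
      rw [mul_div_assoc', mul_div_assoc', div_le_div_iff_of_pos_right (by linarith)]
      nlinarith [mul_le_mul_of_nonneg_left hsqrt (Nat.cast_nonneg (α := ℝ) d),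
        mul_nonneg (Nat.cast_nonneg (α := ℝ) d) (Real.sqrt_nonneg (2 * n * smax))]

/-- Deviation bound between discrete and continuous second-order schemes under arbitrary
bounded rounding (Theorem 3): the deviation is at most `16·d·√(2·n·smax)/(1−λ)`. -/
theorem sos_arbitrary_rounding_deviation
    (n d : ℕ) (hn : 1 ≤ n) (smax : ℝ) (s : Fin n → ℝ)
    (hs1 : ∀ i, 1 ≤ s i) (hsmax : ∀ i, s i ≤ smax)
    (lam : ℝ) (hlam0 : 0 < lam) (hlam1 : lam < 1)
    (M : Matrix (Fin n) (Fin n) ℝ)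
    (hcol : ∀ j, ∑ i, M i j = 1)
    (hMs : M.mulVec s = s)
    (hsym : ∀ i j, M i j / s i = M j i / s j)
    (hgap : ∀ w : Fin n → ℝ, ∑ i, w i * s i = 0 →
      ∑ i, s i * (Matrix.vecMul w M i) ^ 2 ≤ lam ^ 2 * ∑ i, s i * (w i) ^ 2)
    (G : SimpleGraph (Fin n)) [DecidableRel G.Adj]
    (hsupp : ∀ i j, i ≠ j → ¬ G.Adj i j → M i j = 0)
    (hdeg : G.maxDegree ≤ d)
    (β : ℝ) (hβ : β = 2 / (1 + Real.sqrt (1 - lam ^ 2)))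
    (e : ℕ → Matrix (Fin n) (Fin n) ℝ)
    (hanti : ∀ s i j, e s i j = -(e s j i))
    (hbdd : ∀ s i j, |e s i j| ≤ 1)
    (hedge : ∀ s i j, ¬ G.Adj i j → e s i j = 0)
    (k : Fin n) (t : ℕ) :
    |∑ u ∈ Finset.range (t + 1), (1 / 2 : ℝ) * ∑ i : Fin n, ∑ j : Fin n,
        if G.Adj i j then (sosQ M β u k i - sosQ M β u k j) * e (t - u) i j else 0|
      ≤ 16 * d * Real.sqrt (2 * n * smax) / (1 - lam) :=
  sos_arbitrary_rounding_deviation_general n d smax s hs1 hsmax lam hlam0 hlam1 M hcol hsym hgap G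
    hdeg β hβ e hbdd k t
end

section
/- Sufficient initial load to avoid negative load in continuous SOS (Theorem 5). Let G be a simple graph on Fin n, let s : Fin n → ℝ with s i ≥ 1 for all i, and let α : Fin n → Fin n → ℝ satisfy α i j ≥ 0, α i j = α j i, α i j = 0 whenever i ≠ j and {i,j} is not an edge of G, and Σ_{j ∈ N(i)} α i j ≤ 1 for every i. Let λ ∈ (0,1) and β = 2/(1+√(1−λ²)). Given an initial load vector x₀, define the heterogeneous continuous second-order trajectory by: x(0) = x₀; y(0) i j = α i j · (x(0) i / s i − x(0) j / s j); x(t+1) i = x(t) i − Σ_j y(t) i j; and y(t+1) i j = (β−1)·y(t) i j + β·α i j·(x(t+1) i / s i − x(t+1) j / s j). Let x̄ i = s i·(Σ_j x₀ j)/(Σ_j s j) be the balanced vector and Δ₀ = max_i |x₀ i − x̄ i|; assume x̄ i ≥ 0 for all i and assume the ℓ₂-contraction ‖x(t) − x̄‖₂ ≤ λ^t·‖x(0) − x̄‖₂ for all t (valid for SOS with optimal β by Muthukrishnan, Ghosh, and Schultz). Then for every node i and every round t, the transient load satisfies x(t) i − Σ_{j ∈ N(i)} |y(t) i j| ≥ −19·√n·Δ₀/√(1−λ).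 In particular, no node's load ever becomes negative (even in the transient state, after sending all outgoing flow but before receiving incoming flow) provided every node initially holds at least 19·√n·Δ₀/√(1−λ) extra load, i.e. the minimum initial load O(√n·Δ(0)/√(1−λ)) suffices to prevent negative load. -/
set_option maxHeartbeats 1000000


/-- Sufficient initial load to avoid negative load in continuous SOS (Theorem 5):
the transient load satisfies
`x(t) i − Σ_{j ∈ N(i)} |y(t) i j| ≥ −19·√n·Δ₀/√(1−λ)`. -/
theorem sos_no_negative_load
    (n : ℕ) (hn : 0 < n)
    (G : SimpleGraph (Fin n)) [DecidableRel G.Adj]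
    (s : Fin n → ℝ) (hs1 : ∀ i, 1 ≤ s i)
    (α : Fin n → Fin n → ℝ)
    (hα0 : ∀ i j, 0 ≤ α i j)
    (hαsym : ∀ i j, α i j = α j i)
    (hαedge : ∀ i j, i ≠ j → ¬ G.Adj i j → α i j = 0)
    (hαsum : ∀ i, ∑ j ∈ G.neighborFinset i, α i j ≤ 1)
    (lam : ℝ) (hlam0 : 0 < lam) (hlam1 : lam < 1)
    (β : ℝ) (hβ : β = 2 / (1 + Real.sqrt (1 - lam ^ 2)))
    (x₀ : Fin n → ℝ)
    (x : ℕ → Fin n → ℝ) (y : ℕ → Fin n → Fin n → ℝ)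
    (hx0 : x 0 = x₀)
    (hy0 : ∀ i j, y 0 i j = α i j * (x 0 i / s i - x 0 j / s j))
    (hx : ∀ t i, x (t + 1) i = x t i - ∑ j, y t i j)
    (hy : ∀ t i j, y (t + 1) i j =
      (β - 1) * y t i j + β * α i j * (x (t + 1) i / s i - x (t + 1) j / s j))
    (xbar : Fin n → ℝ)
    (hxbar : ∀ i, xbar i = s i * (∑ j, x₀ j) / (∑ j, s j))
    (hxbar0 : ∀ i, 0 ≤ xbar i)
    (Δ₀ : ℝ)
    (hΔ : Δ₀ = Finset.univ.sup' ⟨⟨0, hn⟩, Finset.mem_univ _⟩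
      (fun i => |x₀ i - xbar i|))
    (hcontract : ∀ t : ℕ,
      Real.sqrt (∑ i, (x t i - xbar i) ^ 2)
        ≤ lam ^ t * Real.sqrt (∑ i, (x 0 i - xbar i) ^ 2)) :
    ∀ (i : Fin n) (t : ℕ),
      -(19 * Real.sqrt n * Δ₀ / Real.sqrt (1 - lam))
        ≤ x t i - ∑ j ∈ G.neighborFinset i, |y t i j| := by
  have hΔi : ∀ k, |x₀ k - xbar k| ≤ Δ₀ := by
    intro k; rw [hΔ]
    exact Finset.le_sup' (fun i => |x₀ i - xbar i|) (Finset.mem_univ k)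
  have hΔ0 : 0 ≤ Δ₀ := le_trans (abs_nonneg _) (hΔi ⟨0, hn⟩)
  set C : ℝ := Real.sqrt n * Δ₀ with hC
  have hC0 : 0 ≤ C := mul_nonneg (Real.sqrt_nonneg _) hΔ0
  have hs0 : ∀ k, 0 < s k := fun k => lt_of_lt_of_le one_pos (hs1 k)
  -- initial ℓ2 bound
  have hinit : Real.sqrt (∑ k, (x 0 k - xbar k) ^ 2) ≤ C := by
    have h1 : ∑ k, (x 0 k - xbar k) ^ 2 ≤ (n : ℝ) * Δ₀ ^ 2 := by
      calc ∑ k, (x 0 k - xbar k) ^ 2 ≤ ∑ _k : Fin n, Δ₀ ^ 2 := by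
            apply Finset.sum_le_sum
            intro k _
            rw [hx0]
            calc (x₀ k - xbar k) ^ 2 = |x₀ k - xbar k| ^ 2 := (sq_abs _).symm
              _ ≤ Δ₀ ^ 2 := pow_le_pow_left₀ (abs_nonneg _) (hΔi k) 2
        _ = (n : ℝ) * Δ₀ ^ 2 := by
            simp [Finset.sum_const, Finset.card_univ, nsmul_eq_mul]
    calc Real.sqrt (∑ k, (x 0 k - xbar k) ^ 2) ≤ Real.sqrt ((n : ℝ) * Δ₀ ^ 2) :=
          Real.sqrt_le_sqrt h1
      _ = C := by
          rw [hC, Real.sqrt_mul (Nat.cast_nonneg n), Real.sqrt_sq hΔ0]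
  -- pointwise deviation bound
  have hpt : ∀ t k, |x t k - xbar k| ≤ lam ^ t * C := by
    intro t k
    have h1 : |x t k - xbar k| ≤ Real.sqrt (∑ j, (x t j - xbar j) ^ 2) := by
      rw [← Real.sqrt_sq_eq_abs]
      exact Real.sqrt_le_sqrt (Finset.single_le_sum
        (f := fun j => (x t j - xbar j) ^ 2) (fun j _ => sq_nonneg _) (Finset.mem_univ k))
    calc |x t k - xbar k| ≤ _ := h1
      _ ≤ lam ^ t * Real.sqrt (∑ j, (x 0 j - xbar j) ^ 2) := hcontract t
      _ ≤ lam ^ t * C := mul_le_mul_of_nonneg_left hinit (pow_nonneg hlam0.le t)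
  -- common ratio
  have hratio : ∀ k, xbar k / s k = (∑ j, x₀ j) / (∑ j, s j) := by
    intro k
    have hS : (0:ℝ) < ∑ j, s j :=
      Finset.sum_pos (fun j _ => hs0 j) ⟨⟨0, hn⟩, Finset.mem_univ _⟩
    rw [hxbar k, div_div, mul_comm (∑ j, s j) (s k)]
    exact mul_div_mul_left _ _ (ne_of_gt (hs0 k))
  -- difference bound
  have hdiff : ∀ t k l, |x t k / s k - x t l / s l| ≤ 2 * (lam ^ t * C) := by
    intro t k l
    have e : x t k / s k - x t l / s l
        = (x t k - xbar k) / s k - (x t l - xbar l) / s l := by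
      rw [sub_div, sub_div, hratio k, hratio l]; ring
    rw [e]
    have key : ∀ m, |(x t m - xbar m) / s m| ≤ lam ^ t * C := by
      intro m
      rw [abs_div, abs_of_pos (hs0 m)]
      exact le_trans (div_le_self (abs_nonneg _) (hs1 m)) (hpt t m)
    calc |(x t k - xbar k) / s k - (x t l - xbar l) / s l|
        ≤ |(x t k - xbar k) / s k| + |(x t l - xbar l) / s l| := abs_sub _ _
      _ ≤ lam ^ t * C + lam ^ t * C := add_le_add (key k) (key l)
      _ = 2 * (lam ^ t * C) := by ring
  -- β facts
  have hlamsq : 0 < 1 - lam ^ 2 := by nlinarith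
  set σ : ℝ := Real.sqrt (1 - lam ^ 2) with hσ
  have hσ0 : 0 < σ := Real.sqrt_pos.mpr hlamsq
  have hσsq : σ ^ 2 = 1 - lam ^ 2 := Real.sq_sqrt hlamsq.le
  have hσ1 : σ < 1 := by nlinarith [hσ0]
  have hβ1 : 1 < β := by
    rw [hβ, lt_div_iff₀ (by linarith : (0:ℝ) < 1 + σ)]; linarith
  have hβ2 : β < 2 := by
    rw [hβ, div_lt_iff₀ (by linarith : (0:ℝ) < 1 + σ)]; linarith
  have h1lam : 0 < 1 - lam := by linarith
  have hsqlam : 0 < Real.sqrt (1 - lam) := Real.sqrt_pos.mpr h1lam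
  have hsqlam1 : Real.sqrt (1 - lam) ≤ 1 :=
    Real.sqrt_le_one.mpr (by linarith)
  have hsL : Real.sqrt (1 - lam) ≤ σ := Real.sqrt_le_sqrt (by nlinarith)
  have h2β : Real.sqrt (1 - lam) ≤ 2 - β := by
    have e : 2 - β = 2 * σ / (1 + σ) := by
      rw [hβ]; field_simp; ring
    rw [e]
    calc Real.sqrt (1 - lam) ≤ σ := hsL
      _ ≤ 2 * σ / (1 + σ) := by
          rw [le_div_iff₀ (by linarith : (0:ℝ) < 1 + σ)]; nlinarith
  have h2β0 : 0 < 2 - β := by linarith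
  have hDnn : 0 ≤ 2 * β * C / (2 - β) :=
    div_nonneg (by nlinarith) h2β0.le
  -- bound on the sum of outgoing flows
  have hY : ∀ t i, ∑ j ∈ G.neighborFinset i, |y t i j| ≤ 2 * C + 2 * β * C / (2 - β) := by
    intro t
    induction t with
    | zero =>
      intro i
      calc ∑ j ∈ G.neighborFinset i, |y 0 i j|
          ≤ ∑ j ∈ G.neighborFinset i, α i j * (2 * (lam ^ 0 * C)) := by
            apply Finset.sum_le_sum
            intro j _
            rw [hy0, abs_mul, abs_of_nonneg (hα0 i j)]
            exact mul_le_mul_of_nonneg_left (hdiff 0 i j) (hα0 i j)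
        _ = (∑ j ∈ G.neighborFinset i, α i j) * (2 * C) := by
            rw [← Finset.sum_mul]; norm_num
        _ ≤ 1 * (2 * C) :=
            mul_le_mul_of_nonneg_right (hαsum i) (by linarith)
        _ ≤ 2 * C + 2 * β * C / (2 - β) := by linarith
    | succ t ih =>
      intro i
      have hlamt : lam ^ (t + 1) ≤ 1 := pow_le_one₀ hlam0.le hlam1.le
      have step : ∀ j, |y (t + 1) i j| ≤ (β - 1) * |y t i j| + α i j * (2 * β * C) := by
        intro j
        rw [hy]
        calc |(β - 1) * y t i j + β * α i j * (x (t + 1) i / s i - x (t + 1) j / s j)|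
            ≤ |(β - 1) * y t i j| + |β * α i j * (x (t + 1) i / s i - x (t + 1) j / s j)| :=
              abs_add_le _ _
          _ = (β - 1) * |y t i j|
              + β * α i j * |x (t + 1) i / s i - x (t + 1) j / s j| := by
              rw [abs_mul, abs_mul, abs_of_nonneg (by linarith : (0:ℝ) ≤ β - 1),
                abs_mul, abs_of_nonneg (by linarith : (0:ℝ) ≤ β),
                abs_of_nonneg (hα0 i j)]
          _ ≤ (β - 1) * |y t i j| + β * α i j * (2 * (lam ^ (t + 1) * C)) := by
              have := mul_le_mul_of_nonneg_left (hdiff (t + 1) i j)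
                (mul_nonneg (by linarith : (0:ℝ) ≤ β) (hα0 i j))
              linarith
          _ ≤ (β - 1) * |y t i j| + α i j * (2 * β * C) := by
              have h1 : β * α i j * (2 * (lam ^ (t + 1) * C)) ≤ α i j * (2 * β * C) := by
                have hLC : lam ^ (t + 1) * C ≤ C := by
                  nlinarith [pow_nonneg hlam0.le (t + 1)]
                nlinarith [mul_nonneg (by linarith : (0:ℝ) ≤ β)
                  (mul_nonneg (hα0 i j) (sub_nonneg.mpr hLC))]
              linarith
      calc ∑ j ∈ G.neighborFinset i, |y (t + 1) i j|
          ≤ ∑ j ∈ G.neighborFinset i, ((β - 1) * |y t i j| + α i j * (2 * β * C)) :=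
            Finset.sum_le_sum (fun j _ => step j)
        _ = (β - 1) * (∑ j ∈ G.neighborFinset i, |y t i j|)
            + (∑ j ∈ G.neighborFinset i, α i j) * (2 * β * C) := by
            rw [Finset.sum_add_distrib, Finset.mul_sum, Finset.sum_mul]
        _ ≤ (β - 1) * (2 * C + 2 * β * C / (2 - β)) + 1 * (2 * β * C) := by
            have h1 := ih i
            have h2 := mul_le_mul_of_nonneg_right (hαsum i)
              (by nlinarith : (0:ℝ) ≤ 2 * β * C)
            have h3 := mul_le_mul_of_nonneg_left h1 (by linarith : (0:ℝ) ≤ β - 1)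
            linarith
        _ ≤ 2 * C + 2 * β * C / (2 - β) := by
            have hD : (2 - β) * (2 * β * C / (2 - β)) = 2 * β * C := by
              field_simp
            nlinarith [hDnn, hC0]
  -- finish
  intro i t
  have hxlb : -C ≤ x t i := by
    have h1 := hpt t i
    have h2 := neg_abs_le (x t i - xbar i)
    have h3 : lam ^ t * C ≤ C := by
      nlinarith [pow_nonneg hlam0.le t, pow_le_one₀ hlam0.le hlam1.le (n := t)]
    have := hxbar0 i
    linarith [neg_abs_le (x t i - xbar i), hpt t i]
  have hdivb : 2 * β * C / (2 - β) ≤ 4 * C / Real.sqrt (1 - lam) :=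
    div_le_div₀ (by linarith) (by nlinarith) hsqlam h2β
  have hCdiv : C ≤ C / Real.sqrt (1 - lam) := by
    rw [le_div_iff₀ hsqlam]
    nlinarith
  have hCdiv0 : 0 ≤ C / Real.sqrt (1 - lam) := div_nonneg hC0 hsqlam.le
  have hgoal : 19 * Real.sqrt n * Δ₀ / Real.sqrt (1 - lam)
      = 19 * (C / Real.sqrt (1 - lam)) := by
    rw [hC]; ring
  rw [hgoal]
  have hYt := hY t i
  have h4 : 4 * C / Real.sqrt (1 - lam) = 4 * (C / Real.sqrt (1 - lam)) := by ring
  rw [h4] at hdivb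
  linarith
end

section
/- Geometric recurrence bound for the total outgoing flow of continuous SOS (key estimate in the proof of Theorem 5). Let λ ∈ (0,1), β = 2/(1+√(1−λ²)), and A ≥ 0. Let g : ℕ → ℝ satisfy g(0) ≤ 2A and g(t+1) ≤ (β−1)·g(t) + 4·λ^{t+1}·A for all t ∈ ℕ. Then g(t) ≤ 18·A/√(1−λ) for every t ∈ ℕ. -/
/-- Geometric recurrence bound for the total outgoing flow of continuous SOS
(key estimate in the proof of Theorem 5): `g(t) ≤ 18·A/√(1−λ)`. -/
theorem sos_flow_recurrence_bound
    (lam : ℝ) (hlam0 : 0 < lam) (hlam1 : lam < 1)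
    (β : ℝ) (hβ : β = 2 / (1 + Real.sqrt (1 - lam ^ 2)))
    (A : ℝ) (hA : 0 ≤ A)
    (g : ℕ → ℝ) (hg0 : g 0 ≤ 2 * A)
    (hg : ∀ t : ℕ, g (t + 1) ≤ (β - 1) * g t + 4 * lam ^ (t + 1) * A) :
    ∀ t : ℕ, g t ≤ 18 * A / Real.sqrt (1 - lam) := by
  have hlam2 : (0:ℝ) < 1 - lam ^ 2 := by nlinarith
  set s := Real.sqrt (1 - lam ^ 2) with hs
  have hs0 : 0 < s := Real.sqrt_pos.mpr hlam2
  have hs1 : s ≤ 1 := Real.sqrt_le_one.mpr (by nlinarith)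
  set r := Real.sqrt (1 - lam) with hr
  have hr0 : 0 < r := Real.sqrt_pos.mpr (by linarith)
  have hr1 : r ≤ 1 := Real.sqrt_le_one.mpr (by linarith)
  have hrs : r ≤ s := Real.sqrt_le_sqrt (by nlinarith)
  have hβge : 1 ≤ β := by
    rw [hβ, le_div_iff₀ (by linarith)]; linarith
  have h2β : s ≤ 2 - β := by
    have : β ≤ 2 - s := by
      rw [hβ, div_le_iff₀ (by linarith)]; nlinarith
    linarith
  have hM0 : 0 ≤ 18 * A / r := by positivity
  have hrA : r * (18 * A / r) = 18 * A := by field_simp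
  intro t
  induction t with
  | zero =>
    have h18 : 18 * A ≤ 18 * A / r := by
      rw [le_div_iff₀ hr0]; nlinarith
    calc g 0 ≤ 2 * A := hg0
      _ ≤ 18 * A := by nlinarith
      _ ≤ 18 * A / r := h18
  | succ t ih =>
    have hlpow : lam ^ (t + 1) ≤ lam := by
      calc lam ^ (t + 1) ≤ lam ^ 1 :=
            pow_le_pow_of_le_one (le_of_lt hlam0) (le_of_lt hlam1) (Nat.le_add_left 1 t)
        _ = lam := pow_one lam
    have h1 : (β - 1) * g t ≤ (β - 1) * (18 * A / r) :=
      mul_le_mul_of_nonneg_left ih (by linarith)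
    have h2 : 4 * lam ^ (t + 1) * A ≤ 4 * lam * A := by nlinarith
    have h3 : 18 * A ≤ (2 - β) * (18 * A / r) := by
      have := mul_le_mul_of_nonneg_right (le_trans hrs h2β) hM0
      linarith [hrA ▸ this]
    have h4 : (β - 1) * (18 * A / r) + 4 * lam * A ≤ 18 * A / r := by
      nlinarith
    calc g (t + 1) ≤ (β - 1) * g t + 4 * lam ^ (t + 1) * A := hg t
      _ ≤ (β - 1) * (18 * A / r) + 4 * lam * A := by linarith
      _ ≤ 18 * A / r := h4
end

section
/- Geometric recurrence bound for the total outgoing flow of discrete SOS (key estimate in the proof of Theorem 6). Let λ ∈ (0,1), β = 2/(1+√(1−λ²)), A ≥ 0, and B ≥ 0. Let g : ℕ → ℝ satisfy g(0) ≤ 2A + B and g(t+1) ≤ (β−1)·g(t) + 4·λ^{t+1}·A + B for all t ∈ ℕ. Then g(t) ≤ (18·A + 2·B)/√(1−λ) for every t ∈ ℕ. (With A = √n·Δ(0) and B = d², this yields the bound O((√n·Δ(0) + d²)/√(1−λ)) on the magnitude of negative load for the discrete second-order scheme of Theorem 6.) -/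
/-- Geometric recurrence bound for the total outgoing flow of discrete SOS
(key estimate in the proof of Theorem 6): `g(t) ≤ (18·A + 2·B)/√(1−λ)`. -/
theorem sos_discrete_flow_recurrence_bound
    (lam : ℝ) (hlam0 : 0 < lam) (hlam1 : lam < 1)
    (β : ℝ) (hβ : β = 2 / (1 + Real.sqrt (1 - lam ^ 2)))
    (A B : ℝ) (hA : 0 ≤ A) (hB : 0 ≤ B)
    (g : ℕ → ℝ) (hg0 : g 0 ≤ 2 * A + B)
    (hg : ∀ t : ℕ, g (t + 1) ≤ (β - 1) * g t + 4 * lam ^ (t + 1) * A + B) :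
    ∀ t : ℕ, g t ≤ (18 * A + 2 * B) / Real.sqrt (1 - lam) := by
  set s := Real.sqrt (1 - lam ^ 2) with hs
  set r := Real.sqrt (1 - lam) with hr
  have h1l : (0:ℝ) < 1 - lam := by linarith
  have hr0 : 0 < r := Real.sqrt_pos.mpr h1l
  have hr1 : r ≤ 1 := Real.sqrt_le_one.mpr (by linarith)
  have hs0 : 0 < s := Real.sqrt_pos.mpr (by nlinarith)
  have hs1 : s ≤ 1 := Real.sqrt_le_one.mpr (by nlinarith)
  have hsp : (0:ℝ) < 1 + s := by linarith
  have hβ1 : 1 ≤ β := by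
    rw [hβ, le_div_iff₀ hsp]; linarith
  -- s = r * sqrt(1+lam)
  have hsval : s = r * Real.sqrt (1 + lam) := by
    rw [hs, hr, ← Real.sqrt_mul h1l.le]
    ring_nf
  have hq1 : (1:ℝ) ≤ Real.sqrt (1 + lam) := by
    rw [show (1:ℝ) + lam = 1 + lam from rfl]
    exact Real.one_le_sqrt.mpr (by linarith)
  -- key: r ≤ 2 - β
  have hkey : r ≤ 2 - β := by
    rw [hβ]
    have h2 : 2 - 2 / (1 + s) = 2 * s / (1 + s) := by
      field_simp; ring
    rw [h2, le_div_iff₀ hsp, hsval]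
    nlinarith [hr0.le, hq1, hs1, hsval]
  set C := (18 * A + 2 * B) / r with hC
  have hCr : r * C = 18 * A + 2 * B := by
    rw [hC]; field_simp
  have hC0 : 0 ≤ C := by positivity
  have hCbig : 18 * A + 2 * B ≤ C := by
    rw [hC, le_div_iff₀ hr0]
    nlinarith
  intro t
  induction t with
  | zero => calc g 0 ≤ 2 * A + B := hg0
      _ ≤ 18 * A + 2 * B := by linarith
      _ ≤ C := hCbig
  | succ n ih =>
    have hlp : lam ^ (n + 1) ≤ 1 := pow_le_one₀ hlam0.le hlam1.le
    have h1 : g (n + 1) ≤ (β - 1) * C + 4 * A + B := by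
      have := hg n
      have h2 : (β - 1) * g n ≤ (β - 1) * C :=
        mul_le_mul_of_nonneg_left ih (by linarith)
      have h3 : 4 * lam ^ (n + 1) * A ≤ 4 * A := by nlinarith
      linarith
    have h4 : (β - 1) * C + 4 * A + B ≤ C := by
      have h5 : r * C ≤ (2 - β) * C := mul_le_mul_of_nonneg_right hkey hC0
      nlinarith
    linarith
end

section
/- Gap between λ and β−1 for the optimal SOS parameter (inequality in the proof of Theorem 5). For every λ ∈ (0,1), setting β = 2/(1+√(1−λ²)), one has λ − (β − 1) ≥ λ·√(1−λ)/4. (In particular β − 1 < λ.) -/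
/-- Gap between `λ` and `β−1` for the optimal SOS parameter
(inequality in the proof of Theorem 5): `λ − (β−1) ≥ λ·√(1−λ)/4`. -/
theorem sos_lambda_beta_gap
    (lam : ℝ) (hlam0 : 0 < lam) (hlam1 : lam < 1)
    (β : ℝ) (hβ : β = 2 / (1 + Real.sqrt (1 - lam ^ 2))) :
    lam * Real.sqrt (1 - lam) / 4 ≤ lam - (β - 1) := by
  set s := Real.sqrt (1 - lam ^ 2) with hs
  set t := Real.sqrt (1 - lam) with ht
  have hs0 : 0 ≤ s := Real.sqrt_nonneg _
  have ht0 : 0 ≤ t := Real.sqrt_nonneg _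
  have hs2 : s ^ 2 = 1 - lam ^ 2 := by
    rw [hs, Real.sq_sqrt]; nlinarith
  have ht2 : t ^ 2 = 1 - lam := by
    rw [ht, Real.sq_sqrt]; nlinarith
  have hst : t ≤ s := by
    rw [hs, ht]
    apply Real.sqrt_le_sqrt
    nlinarith
  have hpos : 0 < 1 + s := by linarith
  rw [hβ]
  have key : lam - (2 / (1 + s) - 1) = (lam * (1 + s) - (1 - s)) / (1 + s) := by
    field_simp; ring
  rw [key, div_le_div_iff₀ (by norm_num : (0:ℝ) < 4) hpos]
  nlinarith [mul_nonneg (mul_nonneg hlam0.le ht0) (sub_nonneg.mpr hst), mul_nonneg ht0 (mul_nonneg ht0 ht0), sq_nonneg (s - t), mul_nonneg hlam0.le (sub_nonneg.mpr hst), mul_nonneg hlam0.le (mul_nonneg ht0 ht0)]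
end
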